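/- arXiv:1311.5299 — 14 statements merged into one kernel-verified Lean document; each statement's English description precedes it below -/
import Mathlib

section
/- A locally solvable Lie algebra (every finitely generated subalgebra is solvable) cannot be simple. -/
/-!
If `L` were simple, pick `x, y` with `c = ⁅x, y⁆ ≠ 0`. The ideal generated by `c` is all of `L`,
and it is spanned by the iterated brackets `⁅a₁, ⁅a₂, … ⁅aₙ, c⁆…⁆⁆`, so `x` and `y` are linear
combinations of finitely many of them. Hence in the finitely generated, thus solvable, subalgebra
`S` generated by `x`, `y` and the `aᵢ` occurring there, `x` and `y` lie in the ideal of `S`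
generated by `⁅x, y⁆`. Inductively `x` and `y` then lie in every term of the derived series of `S`,
which reaches `0`, so `⁅x, y⁆ = 0`.
-/

open LieSubmodule

section IterBracket

variable {R L M : Type*} [CommRing R] [LieRing L] [AddCommGroup M] [Module R M]
  [LieRingModule L M]

def iterBracket (l : List L) (m : M) : M := l.foldr (⁅·, ·⁆) m

@[simp] lemma iterBracket_nil (m : M) : iterBracket ([] : List L) m = m := rfl

@[simp] lemma iterBracket_cons (a : L) (l : List L) (m : M) :
    iterBracket (a :: l) m = ⁅a, iterBracket l m⁆ := rfl

lemma LieSubmodule.iterBracket_mem (N : LieSubmodule R L M) (l : List L) {m : M} (hm : m ∈ N) :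
    iterBracket l m ∈ N := by
  induction l with
  | nil => exact hm
  | cons a l ih => exact N.lie_mem ih

variable (R L) in
def iterBracketSpan (A : Set L) (m : M) : Submodule R M :=
  Submodule.span R ((iterBracket · m) '' {l | ∀ a ∈ l, a ∈ A})

lemma iterBracketSpan_mono {A B : Set L} (h : A ⊆ B) (m : M) :
    iterBracketSpan R L A m ≤ iterBracketSpan R L B m :=
  Submodule.span_mono <| Set.image_mono fun _ hl a ha => h (hl a ha)

lemma exists_finset_mem_iterBracketSpan {m x : M} (hx : x ∈ iterBracketSpan R L Set.univ m) :
    ∃ t : Finset L, x ∈ iterBracketSpan R L (t : Set L) m := by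
  classical
  have hunion : iterBracketSpan R L Set.univ m =
      ⨆ t : Finset L, iterBracketSpan R L (t : Set L) m := by
    unfold iterBracketSpan
    rw [← Submodule.span_iUnion, ← Set.image_iUnion]
    congr 2
    ext l
    simpa using ⟨l.toFinset, fun a ha => List.mem_toFinset.mpr ha⟩
  rw [hunion] at hx
  exact (Submodule.mem_iSup_of_directed _
    (Monotone.directed_le fun _ _ h => iterBracketSpan_mono (Finset.coe_subset.mpr h) m)).mp hx

variable [LieAlgebra R L] [LieModule R L M]

lemma lie_mem_iterBracketSpan {A : Set L} {a : L} (ha : a ∈ A) {m x : M}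
    (hx : x ∈ iterBracketSpan R L A m) : ⁅a, x⁆ ∈ iterBracketSpan R L A m := by
  induction hx using Submodule.span_induction with
  | mem w hw =>
    obtain ⟨l, hl, rfl⟩ := hw
    exact Submodule.subset_span ⟨a :: l, List.forall_mem_cons.mpr ⟨ha, hl⟩, rfl⟩
  | zero => simp
  | add u v _ _ hu hv => simpa only [lie_add] using Submodule.add_mem _ hu hv
  | smul t u _ hu => simpa only [lie_smul] using Submodule.smul_mem _ t hu

variable (R L) in
lemma lieSpan_singleton_eq_iterBracketSpan (m : M) :
    (lieSpan R L {m}).toSubmodule = iterBracketSpan R L Set.univ m := by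
  let N : LieSubmodule R L M :=
    { iterBracketSpan R L Set.univ m with
      lie_mem := lie_mem_iterBracketSpan (Set.mem_univ _) }
  refine le_antisymm ?_ ?_
  · show lieSpan R L {m} ≤ N
    rw [lieSpan_le, Set.singleton_subset_iff]
    exact Submodule.subset_span ⟨[], by simp, rfl⟩
  · refine Submodule.span_le.mpr ?_
    rintro _ ⟨l, -, rfl⟩
    exact (lieSpan R L {m}).iterBracket_mem l (subset_lieSpan rfl)

end IterBracket

section LieAlgebra

variable {R L : Type*} [CommRing R] [LieRing L] [LieAlgebra R L]

lemma LieHom.map_iterBracket {L' : Type*} [LieRing L'] [LieAlgebra R L'] (f : L →ₗ⁅R⁆ L')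
    (l : List L) (c : L) : f (iterBracket l c) = iterBracket (l.map f) (f c) := by
  induction l with
  | nil => rfl
  | cons a l ih => simp [ih]

lemma LieSubalgebra.mk_mem_lieSpan_of_mem_iterBracketSpan (S : LieSubalgebra R L) {c x : L}
    (hc : c ∈ S) (hx : x ∈ S) (h : x ∈ iterBracketSpan R L (S : Set L) c) :
    (⟨x, hx⟩ : S) ∈ LieSubmodule.lieSpan R S {⟨c, hc⟩} := by
  set I := LieSubmodule.lieSpan R S {(⟨c, hc⟩ : S)}
  suffices iterBracketSpan R L (S : Set L) c ≤ (I : Submodule R S).map S.incl.toLinearMap by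
    obtain ⟨y, hy, hyx⟩ := this h
    obtain rfl : y = ⟨x, hx⟩ := Subtype.ext hyx
    exact hy
  refine Submodule.span_le.mpr ?_
  rintro _ ⟨l, hl, rfl⟩
  lift l to List S using hl
  exact ⟨iterBracket l ⟨c, hc⟩, I.iterBracket_mem l (LieSubmodule.subset_lieSpan rfl),
    S.incl.map_iterBracket l ⟨c, hc⟩⟩

lemma LieAlgebra.lie_eq_zero_of_mem_lieSpan_lie [IsSolvable L] {x y : L}
    (hx : x ∈ lieSpan R L {⁅x, y⁆}) (hy : y ∈ lieSpan R L {⁅x, y⁆}) : ⁅x, y⁆ = 0 := by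
  have hmem : ∀ n, x ∈ derivedSeries R L n ∧ y ∈ derivedSeries R L n := by
    intro n
    induction n with
    | zero => exact ⟨mem_top x, mem_top y⟩
    | succ n ih =>
      have hxy : ⁅x, y⁆ ∈ derivedSeries R L (n + 1) := by
        rw [derivedSeries_def, derivedSeriesOfIdeal_succ]
        exact lie_mem_lie ih.1 ih.2
      have hle : lieSpan R L {⁅x, y⁆} ≤ derivedSeries R L (n + 1) :=
        lieSpan_le.mpr (Set.singleton_subset_iff.mpr hxy)
      exact ⟨hle hx, hle hy⟩
  obtain ⟨k, hk⟩ := IsSolvable.solvable R L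
  have hx0 : x = 0 := by simpa [hk] using (hmem k).1
  rw [hx0, zero_lie]

end LieAlgebra

/-- A locally solvable Lie algebra (every finitely generated Lie subalgebra is solvable)
cannot be simple. -/
theorem stmt1 {F L : Type*} [Field F] [LieRing L] [LieAlgebra F L]
    (hloc : ∀ s : Finset L,
      LieAlgebra.IsSolvable (LieSubalgebra.lieSpan F L (s : Set L))) :
    ¬ LieAlgebra.IsSimple F L := by
  classical
  intro hs
  obtain ⟨x, y, hxy⟩ : ∃ x y : L, ⁅x, y⁆ ≠ 0 := by
    by_contra! h
    exact hs.non_abelian ⟨fun a b => h a b⟩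
  have htop : lieSpan F L {⁅x, y⁆} = ⊤ :=
    (hs.eq_bot_or_eq_top _).resolve_left (by simpa [lieSpan_eq_bot_iff] using hxy)
  have hspan (z : L) : z ∈ iterBracketSpan F L Set.univ ⁅x, y⁆ := by
    rw [← lieSpan_singleton_eq_iterBracketSpan, htop]
    exact mem_top z
  obtain ⟨tx, htx⟩ := exists_finset_mem_iterBracketSpan (hspan x)
  obtain ⟨ty, hty⟩ := exists_finset_mem_iterBracketSpan (hspan y)
  let t := insert x (insert y (tx ∪ ty))
  let S := LieSubalgebra.lieSpan F L (t : Set L)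
  have : LieAlgebra.IsSolvable S := hloc t
  have htS : (t : Set L) ⊆ S := LieSubalgebra.subset_lieSpan
  have hxS : x ∈ S := htS (by simp [t])
  have hyS : y ∈ S := htS (by simp [t])
  have hmem {z : L} (hzS : z ∈ S) {u : Finset L} (hut : u ⊆ t)
      (hz : z ∈ iterBracketSpan F L (u : Set L) ⁅x, y⁆) :
      (⟨z, hzS⟩ : S) ∈ lieSpan F S {⁅(⟨x, hxS⟩ : S), ⟨y, hyS⟩⁆} :=
    S.mk_mem_lieSpan_of_mem_iterBracketSpan (S.lie_mem hxS hyS) hzS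
      (iterBracketSpan_mono ((Finset.coe_subset.mpr hut).trans htS) _ hz)
  have hS := LieAlgebra.lie_eq_zero_of_mem_lieSpan_lie
    (hmem hxS (fun _ h => by simp [t, h]) htx) (hmem hyS (fun _ h => by simp [t, h]) hty)
  exact hxy (congrArg Subtype.val hS)
end

section
/- If R is a simple associative algebra with a nontrivial finite Z-grading R = R_{-n} ⊕ ... ⊕ R_n such that the union of the nonzero-degree components is nonzero, then R is generated as an algebra by the union of the nonzero-degree components ⋃_{i≠0} R_i. -/
/-!
Let `A` be the non-unital subalgebra generated by the components of nonzero degree. A homogeneous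
element `r` of degree `j` multiplies `A` into itself on both sides: for `j ≠ 0` it lies in `A`,
and for `j = 0` it maps each generator of degree `i` to an element of degree `0 + i = i`, again a
generator. As `R` is the sum of its components, `A` is a two-sided ideal; it is nonzero, so it is
all of `R` by simplicity.
-/

theorem NonUnitalSubalgebra.eq_top_of_mul_mem_of_ne_zero {F R : Type*} [CommRing F] [Ring R]
    [Algebra F R] [IsSimpleRing R]
    (A : NonUnitalSubalgebra F R) (hmul : ∀ r : R, ∀ a ∈ A, r * a ∈ A ∧ a * r ∈ A)
    {x : R} (hxA : x ∈ A) (hx0 : x ≠ 0) : A = ⊤ := by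
  let I : TwoSidedIdeal R := .mk' A (zero_mem A) (add_mem · ·) (neg_mem ·)
    (fun {r _} ha => (hmul r _ ha).1) (fun {_ r} ha => (hmul r _ ha).2)
  have hIA : ∀ y, y ∈ I ↔ y ∈ A := TwoSidedIdeal.mem_mk' _ _ _ _ _ _
  have hI : I = ⊤ := (eq_bot_or_eq_top I).resolve_left fun hbot =>
    hx0 <| (TwoSidedIdeal.mem_bot R).1 (hbot ▸ (hIA x).2 hxA)
  exact eq_top_iff.2 fun y _ => (hIA y).1 (hI ▸ trivial)

section
variable {F R ι : Type*} [CommSemiring F] [Ring R] [Algebra F R] [AddMonoid ι]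

def adjoinNonzeroDegree (V : ι → Submodule F R) : NonUnitalSubalgebra F R :=
  NonUnitalAlgebra.adjoin F (⋃ i ∈ {i : ι | i ≠ 0}, (V i : Set R))

variable {V : ι → Submodule F R}

theorem mem_adjoinNonzeroDegree_of_mem {i : ι} (hi : i ≠ 0) {x : R} (hx : x ∈ V i) :
    x ∈ adjoinNonzeroDegree V :=
  NonUnitalAlgebra.subset_adjoin F (Set.mem_iUnion₂.2 ⟨i, hi, hx⟩)

theorem mul_mem_adjoinNonzeroDegree_of_homogeneous
    (hmul : ∀ i j : ι, ∀ a ∈ V i, ∀ b ∈ V j, a * b ∈ V (i + j))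
    {j : ι} {r : R} (hr : r ∈ V j) {a : R} (ha : a ∈ adjoinNonzeroDegree V) :
    r * a ∈ adjoinNonzeroDegree V ∧ a * r ∈ adjoinNonzeroDegree V := by
  set A := adjoinNonzeroDegree V
  induction ha using NonUnitalAlgebra.adjoin_induction with
  | mem x hx =>
    obtain ⟨i, hi, hxi⟩ := Set.mem_iUnion₂.1 hx
    rcases eq_or_ne j 0 with rfl | hj
    · refine ⟨mem_adjoinNonzeroDegree_of_mem hi ?_, mem_adjoinNonzeroDegree_of_mem hi ?_⟩
      · simpa only [zero_add] using hmul 0 i r hr x hxi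
      · simpa only [add_zero] using hmul i 0 x hxi r hr
    · have hrA : r ∈ A := mem_adjoinNonzeroDegree_of_mem hj hr
      have hxA : x ∈ A := mem_adjoinNonzeroDegree_of_mem hi hxi
      exact ⟨mul_mem hrA hxA, mul_mem hxA hrA⟩
  | zero => simp only [mul_zero, zero_mul, zero_mem, and_self]
  | add x y _ _ hx hy =>
    rw [mul_add, add_mul]
    exact ⟨add_mem hx.1 hy.1, add_mem hx.2 hy.2⟩
  | mul x y hxA hyA hx hy =>
    rw [← mul_assoc, mul_assoc x y r]
    exact ⟨mul_mem hx.1 hyA, mul_mem hxA hy.2⟩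
  | smul c x _ hx =>
    rw [mul_smul_comm, smul_mul_assoc]
    exact ⟨SMulMemClass.smul_mem c hx.1, SMulMemClass.smul_mem c hx.2⟩

theorem mul_mem_adjoinNonzeroDegree (hV : ⨆ i, V i = ⊤)
    (hmul : ∀ i j : ι, ∀ a ∈ V i, ∀ b ∈ V j, a * b ∈ V (i + j))
    (r : R) {a : R} (ha : a ∈ adjoinNonzeroDegree V) :
    r * a ∈ adjoinNonzeroDegree V ∧ a * r ∈ adjoinNonzeroDegree V := by
  refine Submodule.iSup_induction V (motive := fun r => r * a ∈ _ ∧ a * r ∈ _)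
    (hV ▸ Submodule.mem_top : r ∈ ⨆ i, V i)
    (fun j x hx => mul_mem_adjoinNonzeroDegree_of_homogeneous hmul hx ha) ?_ ?_
  · simp only [zero_mul, mul_zero, zero_mem, and_self]
  · intro x y hx hy
    rw [add_mul, mul_add]
    exact ⟨add_mem hx.1 hy.1, add_mem hx.2 hy.2⟩

end

theorem stmt2_general {F R : Type*} [Field F] [Ring R] [Algebra F R] [IsSimpleRing R]
    (V : ℤ → Submodule F R)
    (hinternal : DirectSum.IsInternal V)
    (hmul : ∀ i j : ℤ, ∀ a ∈ V i, ∀ b ∈ V j, a * b ∈ V (i + j))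
    (hnontriv : ∃ i : ℤ, i ≠ 0 ∧ V i ≠ ⊥) :
    NonUnitalAlgebra.adjoin F (⋃ i ∈ {i : ℤ | i ≠ 0}, (V i : Set R)) = ⊤ := by
  obtain ⟨i, hi, hVi⟩ := hnontriv
  obtain ⟨x, hxV, hx0⟩ := Submodule.exists_mem_ne_zero_of_ne_bot hVi
  exact (adjoinNonzeroDegree V).eq_top_of_mul_mem_of_ne_zero
    (fun r _ ha => mul_mem_adjoinNonzeroDegree hinternal.submodule_iSup_eq_top hmul r ha)
    (mem_adjoinNonzeroDegree_of_mem hi hxV) hx0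

/-- If `R` is a simple associative algebra with a nontrivial finite `ℤ`-grading
`R = R₋ₙ ⊕ ⋯ ⊕ Rₙ` such that the union of the nonzero-degree components is nonzero,
then `R` is generated as an (associative, non-unital) algebra by `⋃_{i ≠ 0} R_i`. -/
theorem stmt2 {F R : Type*} [Field F] [Ring R] [Algebra F R] [IsSimpleRing R]
    (n : ℕ) (V : ℤ → Submodule F R)
    (hinternal : DirectSum.IsInternal V)
    (hmul : ∀ i j : ℤ, ∀ a ∈ V i, ∀ b ∈ V j, a * b ∈ V (i + j))
    (hbound : ∀ i : ℤ, (n : ℤ) < |i| → V i = ⊥)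
    (hnontriv : ∃ i : ℤ, i ≠ 0 ∧ V i ≠ ⊥) :
    NonUnitalAlgebra.adjoin F (⋃ i ∈ {i : ℤ | i ≠ 0}, (V i : Set R)) = ⊤ :=
  stmt2_general V hinternal hmul hnontriv
end

section
/- Let L be a simple, locally finite-dimensional Lie algebra over a field F. If φ is an element of the centroid of L which also lies in the multiplication algebra of L (the associative algebra of endomorphisms generated by all maps ad(a), a ∈ L), then φ is algebraic over F. -/
/-!
Membership of `φ` in the multiplication algebra is witnessed by finitely many `ad a`, so `φ`
preserves the finite-dimensional Lie subalgebra generated by those `a` and any `x ≠ 0`.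
Hence some nonzero `f` has `f(φ) x = 0`. As `φ` is in the centroid, so is `f(φ)`, and the
kernel of a centroid element is an ideal; by simplicity it is all of `L`, i.e. `f(φ) = 0`.
-/

open Polynomial

theorem Subalgebra.aeval_mem {R A : Type*} [CommSemiring R] [Semiring A] [Algebra R A]
    {S : Subalgebra R A} {a : A} (ha : a ∈ S) (f : R[X]) : aeval a f ∈ S :=
  Algebra.adjoin_le (Set.singleton_subset_iff.mpr ha) (aeval_mem_adjoin_singleton R a)

def Submodule.stabilizerSubalgebra {R M : Type*} [CommSemiring R] [AddCommMonoid M]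
    [Module R M] (p : Submodule R M) : Subalgebra R (Module.End R M) where
  carrier := {ψ | Set.MapsTo ψ p p}
  mul_mem' hψ hχ := hψ.comp hχ
  add_mem' hψ hχ _ hy := p.add_mem (hψ hy) (hχ hy)
  algebraMap_mem' c _ hy := p.smul_mem c hy

theorem Module.End.exists_aeval_apply_eq_zero {K V : Type*} [Field K] [AddCommGroup V]
    [Module K V] {φ : Module.End K V} {p : Submodule K V} [FiniteDimensional K p]
    (hφ : φ ∈ p.stabilizerSubalgebra) {x : V} (hx : x ∈ p) :
    ∃ f : K[X], f ≠ 0 ∧ aeval φ f x = 0 := by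
  let eval : K[X] →ₗ[K] p :=
    LinearMap.codRestrict p ((LinearMap.applyₗ x).comp (aeval φ).toLinearMap)
      fun f => Subalgebra.aeval_mem hφ f hx
  have hnotinj : ¬ Function.Injective eval := fun hinj =>
    Polynomial.not_finite (Module.Finite.of_injective eval hinj)
  obtain ⟨f, hfx, hf⟩ := (Submodule.ne_bot_iff _).mp (mt LinearMap.ker_eq_bot.mp hnotinj)
  exact ⟨f, hf, congrArg Subtype.val (LinearMap.mem_ker.mp hfx)⟩

namespace LieAlgebra

variable {R L : Type*} [CommRing R] [LieRing L] [LieAlgebra R L]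

theorem exists_finset_forall_mem_stabilizerSubalgebra {ψ : Module.End R L}
    (hψ : ψ ∈ NonUnitalAlgebra.adjoin R (Set.range fun a : L => (ad R L a : Module.End R L))) :
    ∃ A : Finset L, ∀ K : LieSubalgebra R L, (A : Set L) ⊆ K →
      ψ ∈ K.toSubmodule.stabilizerSubalgebra := by
  classical
  induction hψ using NonUnitalAlgebra.adjoin_induction with
  | mem ψ hψ =>
    obtain ⟨a, rfl⟩ := hψ
    exact ⟨{a}, fun K hK _ hy => K.lie_mem (hK (Finset.mem_singleton_self a)) hy⟩
  | zero => exact ⟨∅, fun K _ => zero_mem _⟩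
  | add ψ χ _ _ hψ hχ =>
    obtain ⟨A, hA⟩ := hψ
    obtain ⟨B, hB⟩ := hχ
    refine ⟨A ∪ B, fun K hK => add_mem (hA K ?_) (hB K ?_)⟩ <;>
      exact (Finset.coe_subset.mpr (by simp)).trans hK
  | mul ψ χ _ _ hψ hχ =>
    obtain ⟨A, hA⟩ := hψ
    obtain ⟨B, hB⟩ := hχ
    refine ⟨A ∪ B, fun K hK => mul_mem (hA K ?_) (hB K ?_)⟩ <;>
      exact (Finset.coe_subset.mpr (by simp)).trans hK
  | smul c ψ _ hψ =>
    obtain ⟨A, hA⟩ := hψ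
    exact ⟨A, fun K hK => Subalgebra.smul_mem _ (hA K hK) c⟩

theorem apply_lie_of_mem_centralizer {ψ : Module.End R L}
    (hψ : ψ ∈ Subalgebra.centralizer R (Set.range (ad R L))) (a y : L) :
    ψ ⁅a, y⁆ = ⁅a, ψ y⁆ :=
  (LinearMap.congr_fun ((Subalgebra.mem_centralizer_iff R).mp hψ _ ⟨a, rfl⟩) y).symm

theorem mem_centralizer_of_apply_lie {ψ : Module.End R L}
    (hψ : ∀ a y : L, ψ ⁅a, y⁆ = ⁅a, ψ y⁆) :
    ψ ∈ Subalgebra.centralizer R (Set.range (ad R L)) := by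
  rw [Subalgebra.mem_centralizer_iff]
  rintro _ ⟨a, rfl⟩
  ext y
  exact (hψ a y).symm

theorem IsSimple.eq_zero_of_apply_eq_zero [IsSimple R L] {ψ : Module.End R L}
    (hψ : ψ ∈ Subalgebra.centralizer R (Set.range (ad R L))) {x : L} (hx0 : x ≠ 0)
    (hx : ψ x = 0) : ψ = 0 := by
  let ψ' : L →ₗ⁅R,L⁆ L := { ψ with map_lie' := apply_lie_of_mem_centralizer hψ _ _ }
  rcases IsSimple.eq_bot_or_eq_top ψ'.ker with hker | hker
  · exact absurd ((LieSubmodule.eq_bot_iff _).mp hker x hx) hx0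
  · ext y
    exact LieModuleHom.mem_ker.mp (hker ▸ LieSubmodule.mem_top y)

end LieAlgebra

/-- Let `L` be a simple, locally finite-dimensional Lie algebra over a field `F`.
If `φ` lies both in the centroid of `L` (it commutes with all adjoint maps) and in the
multiplication algebra of `L` (the associative subalgebra of `End_F L` generated by the
maps `ad a`), then `φ` is algebraic over `F`. -/
theorem stmt4 {F L : Type*} [Field F] [LieRing L] [LieAlgebra F L]
    [LieAlgebra.IsSimple F L]
    (hloc : ∀ s : Finset L,
      FiniteDimensional F (LieSubalgebra.lieSpan F L (s : Set L)))
    (φ : Module.End F L)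
    (hcent : ∀ a b : L, φ ⁅a, b⁆ = ⁅a, φ b⁆ ∧ φ ⁅a, b⁆ = ⁅φ a, b⁆)
    (hmult : φ ∈ NonUnitalAlgebra.adjoin F
      (Set.range fun a : L => (LieAlgebra.ad F L a : Module.End F L))) :
    IsAlgebraic F φ := by
  classical
  have := LieAlgebra.IsSimple.nontrivial F L
  obtain ⟨x, hx⟩ := exists_ne (0 : L)
  obtain ⟨A, hA⟩ := LieAlgebra.exists_finset_forall_mem_stabilizerSubalgebra hmult
  let K := LieSubalgebra.lieSpan F L (insert x A : Finset L)
  have : FiniteDimensional F K.toSubmodule := hloc (insert x A)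
  have hAK : (A : Set L) ⊆ K :=
    (Finset.coe_subset.mpr (Finset.subset_insert x A)).trans LieSubalgebra.subset_lieSpan
  obtain ⟨f, hf, hfx⟩ := Module.End.exists_aeval_apply_eq_zero (hA K hAK)
    (LieSubalgebra.subset_lieSpan (Finset.mem_coe.mpr (Finset.mem_insert_self x A)))
  have hφ := LieAlgebra.mem_centralizer_of_apply_lie fun a b => (hcent a b).1
  exact ⟨f, hf,
    LieAlgebra.IsSimple.eq_zero_of_apply_eq_zero (Subalgebra.aeval_mem hφ f) hx hfx⟩
end

section
/- Let R be a simple, locally finite-dimensional associative algebra over an algebraically closed field F of characteristic zero. Then the center of R intersects the derived Lie subalgebra trivially: Z(R) ∩ [R,R] = (0), where [R,R] is the span of all commutators ab - ba. -/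
/-!
Left multiplication `a ↦ L a` is a non-unital algebra map into endomorphisms, so `trace ∘ L`
vanishes on commutators. Let `A` be a finite-dimensional subalgebra carrying a presentation of the
central element `z` as a combination of commutators. Multiplication by `z` preserves the span of
commutators of `A`, so `trace (L z ^ n) = 0` for all `n ≥ 1`; over an algebraically closed field
of characteristic zero this forces `L z` to be nilpotent, because the dimensions of the
generalized eigenspaces satisfy a Vandermonde system. On the other hand, simplicity of `R` makes
the annihilator of a nonzero central element a proper two-sided ideal, hence zero, so `L z` is
injective. Both together give `z = 0`.
-/

open Polynomial Module LinearMap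

theorem eq_zero_of_finsum_mul_pow_eq_zero {K : Type*} [Field K] {c : K → K}
    (hc : (Function.support c).Finite) (h : ∀ n, 0 < n → ∑ᶠ μ, c μ * μ ^ n = 0)
    {μ₀ : K} (hμ₀ : μ₀ ≠ 0) : c μ₀ = 0 := by
  classical
  set s := hc.toFinset
  have hsum (n : ℕ) (hn : 0 < n) : ∑ μ ∈ s, c μ * μ ^ n = 0 := by
    rw [← h n hn, finsum_eq_sum_of_support_subset]
    intro μ hμ
    simpa [s] using left_ne_zero_of_mul hμ
  by_cases hs : μ₀ ∈ s
  swap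
  · simpa [s] using hs
  -- `X * q` vanishes at `0` and on `s \ {μ₀}` but not at `μ₀`, so pairing it with `c` isolates `c μ₀`
  set q : K[X] := ∏ ν ∈ s.erase μ₀, (X - C ν)
  have hpair : ∑ μ ∈ s, c μ * (μ * q.eval μ) = 0 := by
    simp_rw [eval_eq_sum_range, Finset.mul_sum, Finset.sum_comm (s := s)]
    refine Finset.sum_eq_zero fun i _ => ?_
    calc ∑ μ ∈ s, c μ * (μ * (q.coeff i * μ ^ i))
        = q.coeff i * ∑ μ ∈ s, c μ * μ ^ (i + 1) := by
          rw [Finset.mul_sum]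
          exact Finset.sum_congr rfl fun μ _ => by ring
      _ = 0 := by rw [hsum _ i.succ_pos, mul_zero]
  have hq : q.eval μ₀ ≠ 0 := by
    simp only [q, eval_prod, eval_sub, eval_X, eval_C, Finset.prod_ne_zero_iff, sub_ne_zero]
    exact fun ν hν => (Finset.ne_of_mem_erase hν).symm
  rw [Finset.sum_eq_single_of_mem μ₀ hs fun ν hν hne => by
    simp [q, eval_prod, Finset.prod_eq_zero (Finset.mem_erase.mpr ⟨hne, hν⟩)]] at hpair
  simpa [hμ₀, hq] using hpair

namespace Module.End

variable {K V : Type*} [Field K] [AddCommGroup V] [Module K V] [FiniteDimensional K V]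

theorem trace_restrict_maxGenEigenspace_pow (f : End K V) (μ : K) (n : ℕ) :
    trace K _ (f.restrict (f.mapsTo_maxGenEigenspace_of_comm rfl μ) ^ n) =
      finrank K (f.maxGenEigenspace μ) * μ ^ n := by
  set g := f.restrict (f.mapsTo_maxGenEigenspace_of_comm rfl μ)
  have hnil : IsNilpotent (g - algebraMap K _ μ) := by
    convert f.isNilpotent_restrict_maxGenEigenspace_sub_algebraMap μ using 1
    ext
    simp [g, algebraMap_end_apply]
    rfl
  induction n with
  | zero => simp
  | succ n ih =>
    rw [pow_succ, mul_eq_comp,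
      trace_comp_eq_mul_of_commute_of_isNilpotent μ ((Commute.refl g).pow_left n) hnil, ih]
    ring

theorem trace_pow_eq_finsum_finrank_mul_pow [IsAlgClosed K] (f : End K V) (n : ℕ) :
    trace K V (f ^ n) = ∑ᶠ μ, (finrank K (f.maxGenEigenspace μ) : K) * μ ^ n := by
  classical
  have hfin := WellFoundedGT.finite_ne_bot_of_iSupIndep f.independent_maxGenEigenspace
  have hmaps (μ : K) := f.mapsTo_maxGenEigenspace_of_comm ((Commute.refl f).pow_right n) μ
  rw [trace_eq_sum_trace_restrict' (DirectSum.isInternal_submodule_of_iSupIndep_of_iSup_eq_top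
    f.independent_maxGenEigenspace f.iSup_maxGenEigenspace_eq_top) hfin hmaps,
    finsum_eq_sum_of_support_subset _ (s := hfin.toFinset) fun μ hμ => ?_]
  · refine Finset.sum_congr rfl fun μ _ => ?_
    rw [← trace_restrict_maxGenEigenspace_pow]
    exact congrArg (trace K _) (pow_restrict n _).symm
  · exact hfin.mem_toFinset.mpr fun hbot => hμ (by simp [Submodule.finrank_eq_zero.mpr hbot])

theorem isNilpotent_of_trace_pow_eq_zero [IsAlgClosed K] [CharZero K] (f : End K V)
    (h : ∀ n, 0 < n → trace K V (f ^ n) = 0) : IsNilpotent f := by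
  have hbot (μ : K) (hμ : μ ≠ 0) : f.maxGenEigenspace μ = ⊥ := by
    have hsupp : (Function.support fun μ => (finrank K (f.maxGenEigenspace μ) : K)).Finite :=
      (WellFoundedGT.finite_ne_bot_of_iSupIndep f.independent_maxGenEigenspace).subset
        fun μ hμ hbot => hμ (by simp [Submodule.finrank_eq_zero.mpr hbot])
    simpa using eq_zero_of_finsum_mul_pow_eq_zero hsupp
      (fun n hn => (f.trace_pow_eq_finsum_finrank_mul_pow n).symm.trans (h n hn)) hμ
  have htop : f.maxGenEigenspace 0 = ⊤ := by
    rw [← f.iSup_maxGenEigenspace_eq_top]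
    refine le_antisymm (le_iSup _ 0) (iSup_le fun μ => ?_)
    rcases eq_or_ne μ 0 with rfl | hμ
    · exact le_rfl
    · simp [hbot μ hμ]
  rw [isNilpotent_iff_charpoly, charpoly_eq_X_pow_iff]
  intro x
  simpa using (f.mem_maxGenEigenspace 0 x).mp (htop ▸ Submodule.mem_top)

end Module.End

abbrev commutatorSpan (F A : Type*) [Field F] [NonUnitalRing A] [Module F A] : Submodule F A :=
  Submodule.span F {x : A | ∃ a b : A, x = a * b - b * a}

section CommutatorSpan

variable {F A : Type*} [Field F] [NonUnitalRing A] [Module F A]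

theorem commutator_mem_commutatorSpan (a b : A) : a * b - b * a ∈ commutatorSpan F A :=
  Submodule.subset_span ⟨a, b, rfl⟩

theorem NonUnitalAlgHom.map_mem_commutatorSpan {B : Type*} [NonUnitalRing B] [Module F B]
    (φ : A →ₙₐ[F] B) {x : A} (hx : x ∈ commutatorSpan F A) : φ x ∈ commutatorSpan F B := by
  refine (Submodule.span_le (p := (commutatorSpan F B).comap (φ : A →ₗ[F] B))).mpr ?_ hx
  rintro _ ⟨a, b, rfl⟩
  simpa using commutator_mem_commutatorSpan (φ a) (φ b)

theorem NonUnitalSubalgebra.map_commutatorSpan_mono {S T : NonUnitalSubalgebra F A} (h : S ≤ T) :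
    (commutatorSpan F S).map (NonUnitalSubalgebraClass.subtype S : S →ₗ[F] A) ≤
      (commutatorSpan F T).map (NonUnitalSubalgebraClass.subtype T : T →ₗ[F] A) := by
  rintro _ ⟨y, hy, rfl⟩
  exact ⟨inclusion h y, (inclusion h).map_mem_commutatorSpan hy, rfl⟩

variable [SMulCommClass F A A]

theorem mul_mem_commutatorSpan_of_central {z : A} (hz : ∀ r, z * r = r * z) {x : A}
    (hx : x ∈ commutatorSpan F A) : z * x ∈ commutatorSpan F A := by
  refine (Submodule.span_le (p := (commutatorSpan F A).comap (mulLeft F z))).mpr ?_ hx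
  rintro _ ⟨a, b, rfl⟩
  have : z * (a * b - b * a) = z * a * b - b * (z * a) := by
    rw [mul_sub, ← mul_assoc, ← mul_assoc, ← mul_assoc, hz b]
  simpa [this] using commutator_mem_commutatorSpan (z * a) b

theorem mulLeft_pow_mul_mulLeft (z x : A) (n : ℕ) :
    mulLeft F z ^ n * mulLeft F x = mulLeft F ((mulLeft F z ^ n) x) := by
  induction n with
  | zero => simp
  | succ n ih =>
    rw [pow_succ', mul_assoc, ih, Module.End.mul_apply, mulLeft_apply, mulLeft_mul,
      Module.End.mul_eq_comp]

variable [IsScalarTower F A A]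

theorem trace_mulLeft_eq_zero_of_mem_commutatorSpan [FiniteDimensional F A] {x : A}
    (hx : x ∈ commutatorSpan F A) : trace F A (mulLeft F x) = 0 := by
  refine (Submodule.span_le (p := ker ((trace F A).comp (LinearMap.mul F A)))).mpr ?_ hx
  rintro _ ⟨a, b, rfl⟩
  rw [SetLike.mem_coe, mem_ker, comp_apply, ← NonUnitalAlgHom.coe_lmul_eq_mul,
    map_sub, map_mul, map_mul, map_sub, trace_mul_comm, sub_self]

theorem isNilpotent_mulLeft_of_mem_commutatorSpan [IsAlgClosed F] [CharZero F]
    [FiniteDimensional F A] {z : A} (hz : ∀ r, z * r = r * z) (hzc : z ∈ commutatorSpan F A) :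
    IsNilpotent (mulLeft F z) := by
  -- `(mulLeft F z ^ n) z` stands for `z ^ (n + 1)`, which has no notation in a non-unital ring
  have hmem (n : ℕ) : (mulLeft F z ^ n) z ∈ commutatorSpan F A := by
    induction n with
    | zero => exact hzc
    | succ n ih =>
      rw [pow_succ', Module.End.mul_apply]
      exact mul_mem_commutatorSpan_of_central hz ih
  refine Module.End.isNilpotent_of_trace_pow_eq_zero _ fun n hn => ?_
  obtain ⟨m, rfl⟩ := Nat.exists_eq_add_of_lt hn
  rw [zero_add, pow_succ, mulLeft_pow_mul_mulLeft]
  exact trace_mulLeft_eq_zero_of_mem_commutatorSpan (hmem m)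

end CommutatorSpan

theorem exists_finset_mem_map_commutatorSpan_adjoin {F R : Type*} [Field F] [NonUnitalRing R]
    [Module F R] [IsScalarTower F R R] [SMulCommClass F R R] {x : R}
    (hx : x ∈ commutatorSpan F R) :
    ∃ s : Finset R, x ∈ (commutatorSpan F (NonUnitalAlgebra.adjoin F (s : Set R))).map
      (NonUnitalSubalgebraClass.subtype (NonUnitalAlgebra.adjoin F (s : Set R)) : _ →ₗ[F] R) := by
  classical
  induction hx using Submodule.span_induction with
  | mem x hx =>
    obtain ⟨a, b, rfl⟩ := hx
    have ha : a ∈ NonUnitalAlgebra.adjoin F (({a, b} : Finset R) : Set R) :=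
      NonUnitalAlgebra.subset_adjoin F (by simp)
    have hb : b ∈ NonUnitalAlgebra.adjoin F (({a, b} : Finset R) : Set R) :=
      NonUnitalAlgebra.subset_adjoin F (by simp)
    exact ⟨{a, b}, _, commutator_mem_commutatorSpan ⟨a, ha⟩ ⟨b, hb⟩, rfl⟩
  | zero => exact ⟨∅, zero_mem _⟩
  | add x x' _ _ hx hx' =>
    obtain ⟨s, hs⟩ := hx
    obtain ⟨s', hs'⟩ := hx'
    refine ⟨s ∪ s', add_mem ?_ ?_⟩
    · exact NonUnitalSubalgebra.map_commutatorSpan_mono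
        (NonUnitalAlgebra.adjoin_mono (Finset.coe_subset.mpr Finset.subset_union_left)) hs
    · exact NonUnitalSubalgebra.map_commutatorSpan_mono
        (NonUnitalAlgebra.adjoin_mono (Finset.coe_subset.mpr Finset.subset_union_right)) hs'
  | smul c x _ hx =>
    obtain ⟨s, hs⟩ := hx
    exact ⟨s, Submodule.smul_mem _ c hs⟩

section SimpleRing

variable {R : Type*} [NonUnitalRing R]

theorem eq_zero_of_forall_mul_eq_zero (hmul : ∃ a b : R, a * b ≠ 0)
    (hI : ∀ I : TwoSidedIdeal R, I = ⊥ ∨ I = ⊤) {x : R} (hx : ∀ r, x * r = 0) : x = 0 := by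
  let I : TwoSidedIdeal R := .mk' {x | ∀ r, x * r = 0} (by simp)
    (fun hx hy r => by rw [add_mul, hx r, hy r, add_zero])
    (fun hx r => by rw [neg_mul, hx r, neg_zero])
    (fun hy r => by rw [mul_assoc, hy r, mul_zero])
    (fun hx r => by rw [mul_assoc, hx])
  have hmem (y : R) : y ∈ I ↔ ∀ r, y * r = 0 := TwoSidedIdeal.mem_mk' ..
  obtain ⟨a, b, hab⟩ := hmul
  rcases hI I with hbot | htop
  · simpa [hbot] using (hmem x).mpr hx
  · exact absurd ((hmem a).mp (htop ▸ TwoSidedIdeal.mem_top R) b) hab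

theorem eq_zero_of_mul_eq_zero_of_central (hmul : ∃ a b : R, a * b ≠ 0)
    (hI : ∀ I : TwoSidedIdeal R, I = ⊥ ∨ I = ⊤) {z : R} (hz : ∀ r, z * r = r * z) (hz0 : z ≠ 0)
    {x : R} (hx : z * x = 0) : x = 0 := by
  let I : TwoSidedIdeal R := .mk' {x | z * x = 0} (by simp)
    (fun hx hy => show z * _ = 0 by rw [mul_add, hx, hy, add_zero])
    (fun hx => show z * _ = 0 by rw [mul_neg, hx, neg_zero])
    (fun {x _} hy => show z * _ = 0 by rw [← mul_assoc, hz x, mul_assoc, hy, mul_zero])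
    (fun hx => show z * _ = 0 by rw [← mul_assoc, hx, zero_mul])
  have hmem (y : R) : y ∈ I ↔ z * y = 0 := TwoSidedIdeal.mem_mk' ..
  rcases hI I with hbot | htop
  · simpa [hbot] using (hmem x).mpr hx
  · exact absurd (eq_zero_of_forall_mul_eq_zero hmul hI fun r =>
      (hmem r).mp (htop ▸ TwoSidedIdeal.mem_top R)) hz0

end SimpleRing

/-- Let `R` be a simple, locally finite-dimensional associative algebra over an
algebraically closed field `F` of characteristic zero. Then the center of `R` meets the
span of all commutators trivially: `Z(R) ∩ [R,R] = 0`. -/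
theorem stmt5 {F R : Type*} [Field F] [IsAlgClosed F] [CharZero F]
    [NonUnitalRing R] [Module F R] [IsScalarTower F R R] [SMulCommClass F R R]
    (hsimple : (∃ a b : R, a * b ≠ 0) ∧ ∀ I : TwoSidedIdeal R, I = ⊥ ∨ I = ⊤)
    (hloc : ∀ s : Finset R,
      FiniteDimensional F (NonUnitalAlgebra.adjoin F (s : Set R)))
    (z : R) (hz : ∀ r : R, z * r = r * z)
    (hzc : z ∈ Submodule.span F {x : R | ∃ a b : R, x = a * b - b * a}) :
    z = 0 := by
  obtain ⟨s, y, hy, rfl⟩ := exists_finset_mem_map_commutatorSpan_adjoin hzc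
  have := hloc s
  by_contra hy0
  have hinj : Function.Injective (mulLeft F y) :=
    (injective_iff_map_eq_zero _).mpr fun r hr => Subtype.ext <|
      eq_zero_of_mul_eq_zero_of_central hsimple.1 hsimple.2 hz hy0 (congrArg Subtype.val hr)
  obtain ⟨k, hk⟩ := isNilpotent_mulLeft_of_mem_commutatorSpan (fun r => Subtype.ext (hz r)) hy
  have hyk : (mulLeft F y ^ k) y = (mulLeft F y ^ k) 0 := by simp [hk]
  rw [Module.End.coe_pow] at hyk
  exact hy0 (by simp [hinj.iterate k hyk])
end

section
/- Let A be a simple, locally finite-dimensional associative algebra over a field. For each finite subset α ⊆ A, let A_α be the (finite-dimensional) subalgebra generated by α, and N_α its Jacobson radical. If f is a multilinear polynomial such that f vanishes on A_α/N_α for every finite subset α, then f vanishes on A. -/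
/-!
If `f(v) = z ≠ 0`, simplicity of `A` gives `1 = ∑ aᵢ z bᵢ`. In the finite-dimensional
subalgebra `B` generated by `v` and the `aᵢ, bᵢ`, the Jacobson radical is the largest nilpotent
ideal: it is nilpotent because `B` is Artinian, and it contains every nilpotent ideal because
`1 + n` is a unit for nilpotent `n`. So `z`, hence `1`, lies in a nilpotent ideal of `B`, which
is absurd.
-/

/-- Evaluation of the multilinear (noncommutative) polynomial
`f(x₁,…,xₘ) = ∑_{σ ∈ Sₘ} c_σ x_{σ(1)} ⋯ x_{σ(m)}` at a tuple `v`. -/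
def evalMultilinear {F A : Type*} [Field F] [Ring A] [Algebra F A] {m : ℕ}
    (c : Equiv.Perm (Fin m) → F) (v : Fin m → A) : A :=
  ∑ σ : Equiv.Perm (Fin m), c σ • (List.ofFn fun i => v (σ i)).prod

/-- A two-sided ideal `N` is nilpotent if all products of some fixed length `d > 0` of
elements of `N` vanish. -/
def IsNilpotentTwoSidedIdeal {A : Type*} [Ring A] (N : TwoSidedIdeal A) : Prop :=
  ∃ d : ℕ, 0 < d ∧ ∀ l : List A, l.length = d → (∀ x ∈ l, x ∈ N) → l.prod = 0

namespace IsNilpotentTwoSidedIdeal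

variable {R : Type*} [Ring R] {N : TwoSidedIdeal R}

lemma isNilpotent_of_mem (hN : IsNilpotentTwoSidedIdeal N) {x : R} (hx : x ∈ N) :
    IsNilpotent x := by
  obtain ⟨d, -, hd⟩ := hN
  refine ⟨d, ?_⟩
  simpa using hd (List.replicate d x) (by simp) (fun y hy => List.eq_of_mem_replicate hy ▸ hx)

lemma one_notMem [Nontrivial R] (hN : IsNilpotentTwoSidedIdeal N) : (1 : R) ∉ N := fun h =>
  not_isNilpotent_one (hN.isNilpotent_of_mem h)

lemma le_jacobson_bot (hN : IsNilpotentTwoSidedIdeal N) :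
    N ≤ (⊥ : TwoSidedIdeal R).jacobson := by
  intro x hx
  rw [TwoSidedIdeal.mem_jacobson_iff]
  intro y
  obtain ⟨z, hz⟩ :=
    (hN.isNilpotent_of_mem (N.mul_mem_left y x hx)).isUnit_add_one.exists_left_inv
  exact ⟨z, by rw [TwoSidedIdeal.mem_bot, ← hz]; noncomm_ring⟩

end IsNilpotentTwoSidedIdeal

lemma Ideal.list_prod_mem_pow {R : Type*} [Ring R] (I : Ideal R) {l : List R}
    (hl : ∀ x ∈ l, x ∈ I) : l.prod ∈ I ^ l.length := by
  induction l using List.reverseRecOn with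
  | nil =>
    rw [List.prod_nil, List.length_nil, Submodule.pow_zero]
    exact Submodule.one_le.mp le_rfl
  | append_singleton l x ih =>
    rw [List.prod_append, List.prod_singleton, List.length_append, List.length_singleton,
      Submodule.pow_succ]
    exact Submodule.mul_mem_mul (ih fun y hy => hl y (by simp [hy])) (hl x (by simp))

lemma TwoSidedIdeal.asIdeal_jacobson_bot {R : Type*} [Ring R] :
    (⊥ : TwoSidedIdeal R).jacobson.asIdeal = Ring.jacobson R := by
  rw [asIdeal_jacobson, ← Ideal.jacobson_bot]
  rfl

lemma isNilpotentTwoSidedIdeal_jacobson_bot {R : Type*} [Ring R] [IsSemiprimaryRing R] :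
    IsNilpotentTwoSidedIdeal (⊥ : TwoSidedIdeal R).jacobson := by
  obtain ⟨n, hn⟩ := IsSemiprimaryRing.isNilpotent (R := R)
  refine ⟨n + 1, n.succ_pos, fun l hlen hl => ?_⟩
  have hpow : Ring.jacobson R ^ (n + 1) = ⊥ := by
    rw [Submodule.pow_succ, hn, zero_mul]
    rfl
  have hprod := (Ring.jacobson R).list_prod_mem_pow (l := l) fun x hx => by
    rw [← TwoSidedIdeal.asIdeal_jacobson_bot, TwoSidedIdeal.mem_asIdeal]
    exact hl x hx
  rwa [hlen, hpow, Ideal.mem_bot] at hprod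

lemma TwoSidedIdeal.exists_list_of_mem_span_singleton {R : Type*} [Ring R] {z x : R}
    (hx : x ∈ span {z}) : ∃ l : List (R × R), x = (l.map fun p => p.1 * z * p.2).sum := by
  rw [mem_span_iff_mem_addSubgroup_closure] at hx
  induction hx using AddSubgroup.closure_induction with
  | mem y hy =>
    obtain ⟨-, ⟨a, -, -, rfl, rfl⟩, b, -, rfl⟩ := hy
    exact ⟨[(a, b)], by simp⟩
  | zero => exact ⟨[], by simp⟩
  | add y w _ _ ihy ihw =>
    obtain ⟨l, rfl⟩ := ihy
    obtain ⟨l', rfl⟩ := ihw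
    exact ⟨l ++ l', by simp⟩
  | neg y _ ihy =>
    obtain ⟨l, rfl⟩ := ihy
    exact ⟨l.map fun p => (-p.1, p.2), by simp [List.sum_neg, Function.comp_def]⟩

lemma TwoSidedIdeal.exists_mem_coe_eq_sum_mul_mul {F A : Type*} [CommRing F] [Ring A]
    [Algebra F A] {B : Subalgebra F A} (N : TwoSidedIdeal B) {z : B} (hz : z ∈ N)
    (l : List (A × A)) (hl : ∀ p ∈ l, p.1 ∈ B ∧ p.2 ∈ B) :
    ∃ w ∈ N, (w : A) = (l.map fun p => p.1 * (z : A) * p.2).sum := by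
  induction l with
  | nil => exact ⟨0, N.zero_mem, by simp⟩
  | cons p l ih =>
    obtain ⟨w, hwN, hw⟩ := ih fun q hq => hl q (List.mem_cons_of_mem p hq)
    obtain ⟨ha, hb⟩ := hl p List.mem_cons_self
    exact ⟨⟨p.1, ha⟩ * z * ⟨p.2, hb⟩ + w,
      N.add_mem (N.mul_mem_right _ _ (N.mul_mem_left _ _ hz)) hwN, by simp [hw]⟩

lemma map_evalMultilinear {F A B : Type*} [Field F] [Ring A] [Algebra F A] [Ring B] [Algebra F B]
    (φ : A →ₐ[F] B) {m : ℕ} (c : Equiv.Perm (Fin m) → F) (v : Fin m → A) :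
    φ (evalMultilinear c v) = evalMultilinear c (φ ∘ v) := by
  simp only [evalMultilinear, map_sum, map_smul, map_list_prod, List.map_ofFn]
  rfl

/-- Let `A` be a simple, locally finite-dimensional associative algebra over a field.
For a finite subset `α ⊆ A` let `A_α` be the subalgebra it generates and `N_α` its radical
(the largest nilpotent two-sided ideal). If a multilinear polynomial `f` vanishes on
`A_α / N_α` for every finite `α`, then `f` vanishes on `A`. -/
theorem stmt6 {F A : Type*} [Field F] [Ring A] [Algebra F A] [IsSimpleRing A]
    (hloc : ∀ α : Finset A, FiniteDimensional F (Algebra.adjoin F (α : Set A)))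
    {m : ℕ} (c : Equiv.Perm (Fin m) → F)
    (hvanish : ∀ α : Finset A,
      ∀ N : TwoSidedIdeal (Algebra.adjoin F (α : Set A)),
        IsNilpotentTwoSidedIdeal N →
        (∀ N' : TwoSidedIdeal (Algebra.adjoin F (α : Set A)),
          IsNilpotentTwoSidedIdeal N' → N' ≤ N) →
        ∀ v : Fin m → Algebra.adjoin F (α : Set A), evalMultilinear c v ∈ N) :
    ∀ v : Fin m → A, evalMultilinear c v = 0 := by
  classical
  intro v
  by_contra hz
  obtain ⟨l, hl⟩ := TwoSidedIdeal.exists_list_of_mem_span_singleton <|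
    IsSimpleRing.one_mem_of_ne_zero_mem _ hz (TwoSidedIdeal.subset_span rfl)
  let α : Finset A := (List.ofFn v ++ l.map Prod.fst ++ l.map Prod.snd).toFinset
  let B := Algebra.adjoin F (α : Set A)
  have hα : ∀ x ∈ α, x ∈ B := fun x hx => Algebra.subset_adjoin hx
  have hlα : ∀ p ∈ l, p.1 ∈ α ∧ p.2 ∈ α := fun p hp => by
    simp [α, List.mem_map_of_mem hp]
  have := hloc α
  have := IsArtinianRing.of_finite F B
  let v' : Fin m → B := fun i => ⟨v i, hα _ (by simp [α])⟩
  have hfN := hvanish α _ isNilpotentTwoSidedIdeal_jacobson_bot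
    (fun _ hN' => hN'.le_jacobson_bot) v'
  obtain ⟨w, hwN, hw⟩ := TwoSidedIdeal.exists_mem_coe_eq_sum_mul_mul _ hfN l
    fun p hp => (hlα p hp).imp (hα _) (hα _)
  have hf : ((evalMultilinear c v' : B) : A) = evalMultilinear c v :=
    map_evalMultilinear B.val c v'
  have hw1 : w = 1 := Subtype.ext <| by rw [hw, hf, ← hl, OneMemClass.coe_one]
  exact isNilpotentTwoSidedIdeal_jacobson_bot.one_notMem (hw1 ▸ hwN)
end

section
/- Let x be an element of a Lie algebra L over a field F with ad(x)^3 = 0 (a Jordan element), and write X = ad(x). Then for every a ∈ L, with A = ad(a), one has X^2 A X = X A X^2 as operators on L. -/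
/-!
Since `ad` is a Lie algebra homomorphism, `[X, [X, [X, A]]] = ad (X³ a) = 0`. Expanding the triple
commutator in `End L` gives `X³A - 3X²AX + 3XAX² - AX³`, whose outer terms vanish because `X³ = 0`;
dividing by `3` leaves `X²AX = XAX²`.
-/

theorem Ring.lie_lie_lie_self_left {R : Type*} [Ring R] (X A : R) :
    ⁅X, ⁅X, ⁅X, A⁆⁆⁆ = X ^ 3 * A - 3 • (X ^ 2 * A * X) + 3 • (X * A * X ^ 2) - A * X ^ 3 := by
  simp only [Ring.lie_def]
  noncomm_ring

theorem sq_mul_mul_eq_mul_mul_sq_of_pow_three_eq_zero {F R : Type*} [Field F] [Ring R]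
    [Module F R] (h3 : (3 : F) ≠ 0) {X A : R} (hX : X ^ 3 = 0) (h : ⁅X, ⁅X, ⁅X, A⁆⁆⁆ = 0) :
    X ^ 2 * A * X = X * A * X ^ 2 := by
  rw [Ring.lie_lie_lie_self_left, hX, zero_mul, mul_zero, sub_zero, zero_sub,
    neg_add_eq_sub, ← smul_sub, ← Nat.cast_smul_eq_nsmul F] at h
  exact (sub_eq_zero.mp ((smul_eq_zero.mp h).resolve_left (by exact_mod_cast h3))).symm

theorem LieAlgebra.lie_ad_lie_ad_lie_ad_eq_ad {F L : Type*} [CommRing F] [LieRing L]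
    [LieAlgebra F L] (x a : L) :
    ⁅ad F L x, ⁅ad F L x, ⁅ad F L x, ad F L a⁆⁆⁆ = ad F L ((ad F L x ^ 3) a) := by
  simp only [← LieHom.map_lie, pow_succ, pow_zero, one_mul, Module.End.mul_apply, ad_apply]

theorem stmt7_general {F L : Type*} [Field F] [LieRing L] [LieAlgebra F L]
    (h3 : (3 : F) ≠ 0)
    (x : L) (hx : (LieAlgebra.ad F L x) ^ 3 = 0) (a : L) :
    (LieAlgebra.ad F L x) ^ 2 * LieAlgebra.ad F L a * LieAlgebra.ad F L x =
      LieAlgebra.ad F L x * LieAlgebra.ad F L a * (LieAlgebra.ad F L x) ^ 2 := by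
  refine sq_mul_mul_eq_mul_mul_sq_of_pow_three_eq_zero h3 hx ?_
  rw [LieAlgebra.lie_ad_lie_ad_lie_ad_eq_ad, hx, LinearMap.zero_apply, map_zero]

/-- If `x` is a Jordan element (`ad(x)^3 = 0`) of a Lie algebra `L` over a field of
characteristic `≠ 2, 3`, then `X² A X = X A X²` for every `a ∈ L`, where `X = ad x`,
`A = ad a`. -/
theorem stmt7 {F L : Type*} [Field F] [LieRing L] [LieAlgebra F L]
    (h2 : (2 : F) ≠ 0) (h3 : (3 : F) ≠ 0)
    (x : L) (hx : (LieAlgebra.ad F L x) ^ 3 = 0) (a : L) :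
    (LieAlgebra.ad F L x) ^ 2 * LieAlgebra.ad F L a * LieAlgebra.ad F L x =
      LieAlgebra.ad F L x * LieAlgebra.ad F L a * (LieAlgebra.ad F L x) ^ 2 :=
  stmt7_general h3 x hx a
end

section
/- Let x be a Jordan element of a Lie algebra L (i.e., ad(x)^3 = 0) over a field of characteristic ≠ 2, 3, and write X = ad(x). Then X^2 A X^2 = 0 for every a ∈ L, where A = ad(a). -/
/-!
Since `ad` is a Lie algebra homomorphism, `ad(x)^3 = 0` gives
`0 = ad(ad(x)^3 a) = [X, [X, [X, A]]] = X³A - 3X²AX + 3XAX² - AX³`, so `XAX² = X²AX` once `3` can be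
cancelled. Then `X²AX² = (X²AX)X = XAX³ = 0`.
-/

section Ring

variable {R : Type*} [Ring R]

theorem Ring.lie_lie_lie_eq (X A : R) :
    ⁅X, ⁅X, ⁅X, A⁆⁆⁆ = X ^ 3 * A - 3 * (X ^ 2 * A * X) + 3 * (X * A * X ^ 2) - A * X ^ 3 := by
  simp only [Ring.lie_def]
  noncomm_ring

theorem mul_mul_sq_eq_sq_mul_mul_of_lie_lie_lie_eq_zero {X A : R} (hX : X ^ 3 = 0)
    (h3 : IsLeftRegular (3 : R)) (h : ⁅X, ⁅X, ⁅X, A⁆⁆⁆ = 0) : X * A * X ^ 2 = X ^ 2 * A * X := by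
  refine h3 (sub_eq_zero.mp ?_)
  rw [← h, Ring.lie_lie_lie_eq, hX]
  noncomm_ring

theorem sq_mul_mul_sq_eq_zero_of_lie_lie_lie_eq_zero {X A : R} (hX : X ^ 3 = 0)
    (h3 : IsLeftRegular (3 : R)) (h : ⁅X, ⁅X, ⁅X, A⁆⁆⁆ = 0) : X ^ 2 * A * X ^ 2 = 0 :=
  calc X ^ 2 * A * X ^ 2 = X ^ 2 * A * X * X := by noncomm_ring
    _ = X * A * X ^ 2 * X := by rw [mul_mul_sq_eq_sq_mul_mul_of_lie_lie_lie_eq_zero hX h3 h]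
    _ = X * A * X ^ 3 := by noncomm_ring
    _ = 0 := by rw [hX, mul_zero]

end Ring

attribute [local instance 100] LieRing.ofAssociativeRing

theorem LieAlgebra.lie_ad_lie_ad_lie_ad {R L : Type*} [CommRing R] [LieRing L] [LieAlgebra R L]
    (x a : L) :
    ⁅ad R L x, ⁅ad R L x, ⁅ad R L x, ad R L a⁆⁆⁆ = ad R L ((ad R L x ^ 3) a) := by
  simp only [← LieHom.map_lie, pow_succ, pow_zero, one_mul, Module.End.mul_apply, ad_apply]

theorem stmt8_general {F L : Type*} [Field F] [LieRing L] [LieAlgebra F L]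
    (h3 : (3 : F) ≠ 0)
    (x : L) (hx : (LieAlgebra.ad F L x) ^ 3 = 0) (a : L) :
    (LieAlgebra.ad F L x) ^ 2 * LieAlgebra.ad F L a * (LieAlgebra.ad F L x) ^ 2 = 0 := by
  have h3_regular : IsLeftRegular (3 : Module.End F L) := by
    rw [← map_ofNat (algebraMap F (Module.End F L)) 3]
    exact ((Ne.isUnit h3).map _).isRegular.left
  refine sq_mul_mul_sq_eq_zero_of_lie_lie_lie_eq_zero hx h3_regular ?_
  rw [LieAlgebra.lie_ad_lie_ad_lie_ad, hx, LinearMap.zero_apply, map_zero]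

/-- If `x` is a Jordan element (`ad(x)^3 = 0`) of a Lie algebra `L` over a field of
characteristic `≠ 2, 3`, then `X² A X² = 0` for every `a ∈ L`, where `X = ad x`, `A = ad a`. -/
theorem stmt8 {F L : Type*} [Field F] [LieRing L] [LieAlgebra F L]
    (h2 : (2 : F) ≠ 0) (h3 : (3 : F) ≠ 0)
    (x : L) (hx : (LieAlgebra.ad F L x) ^ 3 = 0) (a : L) :
    (LieAlgebra.ad F L x) ^ 2 * LieAlgebra.ad F L a * (LieAlgebra.ad F L x) ^ 2 = 0 :=
  stmt8_general h3 x hx a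
end

section
/- Let x be a Jordan element of a Lie algebra L (ad(x)^3 = 0) over a field of characteristic ≠ 2, 3. Then for all a, b ∈ L: [ad(x)^2(a), ad(x)(b)] = −[ad(x)(a), ad(x)^2(b)]. -/
/-! `ad x` is a derivation, so by the Leibniz rule
`X³⁅a, b⁆ = ⁅X³a, b⁆ + 3⁅X²a, Xb⁆ + 3⁅Xa, X²b⁆ + ⁅a, X³b⁆`.
Since `X³ = 0`, three times `⁅X²a, Xb⁆ + ⁅Xa, X²b⁆` vanishes, and `3` is invertible. -/

namespace LieDerivation

section CommRing

variable {R L : Type*} [CommRing R] [LieRing L] [LieAlgebra R L]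

lemma iterate_three_apply_lie (D : LieDerivation R L L) (a b : L) :
    D^[3] ⁅a, b⁆ =
      ⁅D^[3] a, b⁆ + 3 • ⁅D^[2] a, D b⁆ + 3 • ⁅D a, D^[2] b⁆ + ⁅a, D^[3] b⁆ := by
  simp only [iterate_apply_lie', Nat.reduceAdd, Finset.sum_range_succ, Finset.range_one,
    Finset.sum_singleton, Nat.choose, Function.iterate_zero, id_eq, tsub_zero,
    Function.iterate_succ, Function.comp_apply, one_smul, add_zero,
    Nat.add_one_sub_one, Nat.reduceSub, tsub_self]
  abel

lemma three_nsmul_lie_iterate_add_eq_zero {D : LieDerivation R L L}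
    (hD : ∀ v, D^[3] v = 0) (a b : L) :
    3 • (⁅D^[2] a, D b⁆ + ⁅D a, D^[2] b⁆) = 0 := by
  have h := D.iterate_three_apply_lie a b
  rw [hD, hD, hD, zero_lie, lie_zero, zero_add, add_zero] at h
  rw [smul_add, ← h]

end CommRing

lemma lie_iterate_two_apply_eq_neg {F L : Type*} [Field F] [LieRing L] [LieAlgebra F L]
    (h3 : (3 : F) ≠ 0) {D : LieDerivation F L L} (hD : ∀ v, D^[3] v = 0) (a b : L) :
    ⁅D^[2] a, D b⁆ = -⁅D a, D^[2] b⁆ := by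
  have h := three_nsmul_lie_iterate_add_eq_zero hD a b
  rw [← Nat.cast_smul_eq_nsmul F, Nat.cast_ofNat, smul_eq_zero] at h
  exact eq_neg_of_add_eq_zero_left (h.resolve_left h3)

end LieDerivation

theorem stmt9_general {F L : Type*} [Field F] [LieRing L] [LieAlgebra F L]
    (h3 : (3 : F) ≠ 0)
    (x : L) (hx : (LieAlgebra.ad F L x) ^ 3 = 0) (a b : L) :
    ⁅((LieAlgebra.ad F L x) ^ 2) a, (LieAlgebra.ad F L x) b⁆ =
      -⁅(LieAlgebra.ad F L x) a, ((LieAlgebra.ad F L x) ^ 2) b⁆ := by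
  have hD : ∀ v, (LieDerivation.ad F L x)^[3] v = 0 := fun v => by
    simpa [Module.End.pow_apply] using LinearMap.congr_fun hx v
  simpa [Module.End.pow_apply] using LieDerivation.lie_iterate_two_apply_eq_neg h3 hD a b

/-- If `x` is a Jordan element (`ad(x)^3 = 0`) of a Lie algebra `L` over a field of
characteristic `≠ 2, 3`, then `[X²(a), X(b)] = -[X(a), X²(b)]` for all `a, b ∈ L`. -/
theorem stmt9 {F L : Type*} [Field F] [LieRing L] [LieAlgebra F L]
    (h2 : (2 : F) ≠ 0) (h3 : (3 : F) ≠ 0)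
    (x : L) (hx : (LieAlgebra.ad F L x) ^ 3 = 0) (a b : L) :
    ⁅((LieAlgebra.ad F L x) ^ 2) a, (LieAlgebra.ad F L x) b⁆ =
      -⁅(LieAlgebra.ad F L x) a, ((LieAlgebra.ad F L x) ^ 2) b⁆ :=
  stmt9_general h3 x hx a b
end

section
/- Let x be a Jordan element of a Lie algebra L (ad(x)^3 = 0) over a field of characteristic ≠ 2, 3. Then for all a, b ∈ L: ad(x)^2([[a,x],b]) = ad(x)^2([[b,x],a]). -/
theorem lie_lie_eq_lie_lie_swap_sub {L : Type*} [LieRing L] (a b x : L) :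
    ⁅⁅a, x⁆, b⁆ = ⁅⁅b, x⁆, a⁆ - ⁅x, ⁅a, b⁆⁆ := by
  rw [lie_lie a x b, ← lie_skew x b, lie_neg, ← lie_skew ⁅b, x⁆ a]

theorem LieAlgebra.ad_sq_apply_lie_self_eq_zero {R L : Type*} [CommRing R] [LieRing L]
    [LieAlgebra R L] {x : L} (hx : ad R L x ^ 3 = 0) (c : L) :
    (ad R L x ^ 2) ⁅x, c⁆ = 0 := by
  rw [← ad_apply (R := R), ← Module.End.mul_apply, ← pow_succ, hx, LinearMap.zero_apply]

theorem stmt10_general {F L : Type*} [Field F] [LieRing L] [LieAlgebra F L]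
    (x : L) (hx : (LieAlgebra.ad F L x) ^ 3 = 0) (a b : L) :
    ((LieAlgebra.ad F L x) ^ 2) ⁅⁅a, x⁆, b⁆ = ((LieAlgebra.ad F L x) ^ 2) ⁅⁅b, x⁆, a⁆ := by
  rw [lie_lie_eq_lie_lie_swap_sub, map_sub, LieAlgebra.ad_sq_apply_lie_self_eq_zero hx, sub_zero]

/-- If `x` is a Jordan element (`ad(x)^3 = 0`) of a Lie algebra `L` over a field of
characteristic `≠ 2, 3`, then `ad(x)²([[a,x],b]) = ad(x)²([[b,x],a])` for all `a, b ∈ L`. -/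
theorem stmt10 {F L : Type*} [Field F] [LieRing L] [LieAlgebra F L]
    (h2 : (2 : F) ≠ 0) (h3 : (3 : F) ≠ 0)
    (x : L) (hx : (LieAlgebra.ad F L x) ^ 3 = 0) (a b : L) :
    ((LieAlgebra.ad F L x) ^ 2) ⁅⁅a, x⁆, b⁆ = ((LieAlgebra.ad F L x) ^ 2) ⁅⁅b, x⁆, a⁆ :=
  stmt10_general x hx a b
end

section
/- Let x be a Jordan element of a Lie algebra L (ad(x)^3 = 0) over a field of characteristic ≠ 2, 3. Then for every a ∈ L, the element ad(x)^2(a) is again a Jordan element, i.e., ad([x,[x,a]])^3 = 0. -/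
/-!
Write `X = ad x` and `A = ad a` in the associative algebra `End L`, so that
`ad [x,[x,a]] = Y := [X,[X,A]] = X²A - 2XAX + AX²`. Since `[x,[x,[x,a]]] = ad(x)³ a = 0`,
`X` commutes with `Y`; with `X³ = 0` this reads `3 (XAX² - X²AX) = 0`, so `N := X²AX = XAX²`.
Then `XY = YX = -N` and `XN = NX = NAN = 0`, and expanding the middle factor of
`Y³ = Y (X²A - 2XAX + AX²) Y` kills every term.
-/

attribute [local instance 100] LieRing.ofAssociativeRing

section AssociativeRing

variable {R : Type*} [Ring R]

theorem Ring.lie_lie_eq (X A : R) : ⁅X, ⁅X, A⁆⁆ = X ^ 2 * A - 2 * (X * A * X) + A * X ^ 2 := by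
  simp only [Ring.lie_def]
  noncomm_ring

theorem sq_mul_mul_eq_mul_mul_sq_of_commute_lie_lie {X A : R} (h3 : IsLeftRegular (3 : R))
    (hX : X ^ 3 = 0) (hc : Commute X ⁅X, ⁅X, A⁆⁆) : X ^ 2 * A * X = X * A * X ^ 2 := by
  rw [Ring.lie_lie_eq] at hc
  apply h3
  linear_combination (norm := noncomm_ring) -hc.eq + hX * A - A * hX

theorem lie_lie_pow_three_eq_zero {X A : R} (hX : X ^ 3 = 0)
    (hN : X ^ 2 * A * X = X * A * X ^ 2) : ⁅X, ⁅X, A⁆⁆ ^ 3 = 0 := by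
  rw [Ring.lie_lie_eq]
  generalize hY : X ^ 2 * A - 2 * (X * A * X) + A * X ^ 2 = Y
  generalize hNdef : X ^ 2 * A * X = N at hN
  have hXN : X * N = 0 := by
    linear_combination (norm := noncomm_ring) -X * hNdef + hX * (A * X)
  have hNX : N * X = 0 := by
    linear_combination (norm := noncomm_ring) hN * X + X * A * hX
  have hXY : X * Y = -N := by
    linear_combination (norm := noncomm_ring) -X * hY + hX * A - 2 * hNdef - hN
  have hYX : Y * X = -N := by
    linear_combination (norm := noncomm_ring) -hY * X + hNdef + 2 * hN + A * hX
  have hNAN : N * A * N = 0 :=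
    calc N * A * N = X * A * X ^ 2 * A * (X ^ 2 * A * X) := by rw [← hN, hNdef]
      _ = X * A * (X ^ 2 * A * X * X) * A * X := by noncomm_ring
      _ = 0 := by rw [hNdef, hNX]; noncomm_ring
  calc Y ^ 3 = Y * (X ^ 2 * A - 2 * (X * A * X) + A * X ^ 2) * Y := by rw [hY]; noncomm_ring
    _ = Y * X * X * A * Y - 2 * (Y * X * A * (X * Y)) + Y * A * (X * (X * Y)) := by noncomm_ring
    _ = -(N * X * A * Y) - 2 * (N * A * N) - Y * A * (X * N) := by rw [hXY, hYX]; noncomm_ring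
    _ = 0 := by rw [hNX, hNAN, hXN]; noncomm_ring

end AssociativeRing

theorem LieAlgebra.commute_ad_of_lie_eq_zero {F L : Type*} [CommRing F] [LieRing L]
    [LieAlgebra F L] {x y : L} (h : ⁅x, y⁆ = 0) :
    Commute (LieAlgebra.ad F L x) (LieAlgebra.ad F L y) := by
  rw [commute_iff_lie_eq, ← LieHom.map_lie, h, map_zero]

theorem stmt12_general {F L : Type*} [Field F] [LieRing L] [LieAlgebra F L]
    (h3 : (3 : F) ≠ 0)
    (x : L) (hx : (LieAlgebra.ad F L x) ^ 3 = 0) (a : L) :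
    (LieAlgebra.ad F L ⁅x, ⁅x, a⁆⁆) ^ 3 = 0 := by
  have h3_regular : IsLeftRegular (3 : Module.End F L) := by
    have h := (h3.isUnit.map (algebraMap F (Module.End F L))).isRegular.left
    rwa [map_ofNat] at h
  have hc : Commute (LieAlgebra.ad F L x) (LieAlgebra.ad F L ⁅x, ⁅x, a⁆⁆) := by
    refine LieAlgebra.commute_ad_of_lie_eq_zero ?_
    simpa [pow_succ] using LinearMap.congr_fun hx a
  rw [LieHom.map_lie, LieHom.map_lie] at hc ⊢
  exact lie_lie_pow_three_eq_zero hx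
    (sq_mul_mul_eq_mul_mul_sq_of_commute_lie_lie h3_regular hx hc)

/-- If `x` is a Jordan element (`ad(x)^3 = 0`) of a Lie algebra `L` over a field of
characteristic `≠ 2, 3`, then `ad(x)²(a) = [x,[x,a]]` is again a Jordan element. -/
theorem stmt12 {F L : Type*} [Field F] [LieRing L] [LieAlgebra F L]
    (h2 : (2 : F) ≠ 0) (h3 : (3 : F) ≠ 0)
    (x : L) (hx : (LieAlgebra.ad F L x) ^ 3 = 0) (a : L) :
    (LieAlgebra.ad F L ⁅x, ⁅x, a⁆⁆) ^ 3 = 0 :=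
  stmt12_general h3 x hx a
end

section
/- Let x be a Jordan element of a Lie algebra L (ad(x)^3 = 0) over a field of characteristic ≠ 2, 3. Define a bilinear product on L by a • b := [[a,x],b]. Then ker_L(x) = {a ∈ L : [x,[x,a]] = 0} is a two-sided ideal of the nonassociative algebra (L, •). -/
/-!
Write `D = ad x`, so `D³ = 0` and `D² a = 0`. The Leibniz rule gives `D³ ⁅a, b⁆ = 3 ⁅D a, D² b⁆`,
hence `⁅D a, D² b⁆ = 0` as `3 ≠ 0`. By the Leibniz rule again, `D² ⁅D a, b⁆ = ⁅D a, D² b⁆` and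
`D² ⁅D b, a⁆ = 2 ⁅D² b, D a⁆`, and both vanish.
-/

namespace LieAlgebra

section Leibniz

variable {R L : Type*} [CommRing R] [LieRing L] [LieAlgebra R L]

lemma ad_pow_two_lie (x y z : L) :
    (ad R L x ^ 2) ⁅y, z⁆ =
      ⁅(ad R L x ^ 2) y, z⁆ + 2 • ⁅ad R L x y, ad R L x z⁆ + ⁅y, (ad R L x ^ 2) z⁆ := by
  simp [ad_pow_lie, Finset.Nat.antidiagonal_succ, add_comm]

lemma ad_pow_three_lie (x y z : L) :
    (ad R L x ^ 3) ⁅y, z⁆ =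
      ⁅(ad R L x ^ 3) y, z⁆ + 3 • ⁅ad R L x y, (ad R L x ^ 2) z⁆ +
        3 • ⁅(ad R L x ^ 2) y, ad R L x z⁆ + ⁅y, (ad R L x ^ 3) z⁆ := by
  simp [ad_pow_lie, Finset.Nat.antidiagonal_succ]
  abel

end Leibniz

variable {F L : Type*} [Field F] [LieRing L] [LieAlgebra F L] {x a : L}

theorem lie_ad_ad_pow_two_eq_zero (h3 : (3 : F) ≠ 0) (hx : ad F L x ^ 3 = 0)
    (ha : (ad F L x ^ 2) a = 0) (b : L) : ⁅ad F L x a, (ad F L x ^ 2) b⁆ = 0 := by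
  have h : 3 • ⁅ad F L x a, (ad F L x ^ 2) b⁆ = 0 := by
    simpa [hx, ha] using (ad_pow_three_lie (R := F) x a b).symm
  rw [← Nat.cast_smul_eq_nsmul F, smul_eq_zero] at h
  exact h.resolve_left (by exact_mod_cast h3)

theorem ad_pow_two_lie_ad_left_eq_zero (h3 : (3 : F) ≠ 0) (hx : ad F L x ^ 3 = 0)
    (ha : (ad F L x ^ 2) a = 0) (b : L) : (ad F L x ^ 2) ⁅ad F L x a, b⁆ = 0 := by
  have hDDa : ad F L x (ad F L x a) = 0 := by rwa [← Module.End.mul_apply, ← sq]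
  have hD2Da : (ad F L x ^ 2) (ad F L x a) = 0 := by
    rw [← Module.End.mul_apply, ← pow_succ, pow_succ', Module.End.mul_apply, ha, map_zero]
  rw [ad_pow_two_lie, hD2Da, hDDa, zero_lie, zero_lie, smul_zero, zero_add, zero_add,
    lie_ad_ad_pow_two_eq_zero h3 hx ha]

theorem ad_pow_two_lie_ad_right_eq_zero (h3 : (3 : F) ≠ 0) (hx : ad F L x ^ 3 = 0)
    (ha : (ad F L x ^ 2) a = 0) (b : L) : (ad F L x ^ 2) ⁅ad F L x b, a⁆ = 0 := by
  have hD2Db : (ad F L x ^ 2) (ad F L x b) = 0 := by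
    rw [← Module.End.mul_apply, ← pow_succ, hx, LinearMap.zero_apply]
  rw [ad_pow_two_lie, hD2Db, ha, ← Module.End.mul_apply, ← sq, ← lie_skew ((ad F L x ^ 2) b),
    lie_ad_ad_pow_two_eq_zero h3 hx ha, zero_lie, lie_zero, neg_zero, smul_zero, add_zero,
    add_zero]

end LieAlgebra

theorem stmt13_general {F L : Type*} [Field F] [LieRing L] [LieAlgebra F L]
    (h3 : (3 : F) ≠ 0)
    (x : L) (hx : (LieAlgebra.ad F L x) ^ 3 = 0)
    (a : L) (ha : ⁅x, ⁅x, a⁆⁆ = 0) (b : L) :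
    ⁅x, ⁅x, ⁅⁅a, x⁆, b⁆⁆⁆ = 0 ∧ ⁅x, ⁅x, ⁅⁅b, x⁆, a⁆⁆⁆ = 0 := by
  have ad_sq (y : L) : ⁅x, ⁅x, y⁆⁆ = (LieAlgebra.ad F L x ^ 2) y := by simp [sq]
  have lie_swap (y : L) : ⁅y, x⁆ = -LieAlgebra.ad F L x y := by
    rw [LieAlgebra.ad_apply, lie_skew]
  rw [ad_sq] at ha
  simp only [ad_sq, lie_swap, neg_lie, map_neg, neg_eq_zero]
  exact ⟨LieAlgebra.ad_pow_two_lie_ad_left_eq_zero h3 hx ha b,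
    LieAlgebra.ad_pow_two_lie_ad_right_eq_zero h3 hx ha b⟩

/-- Let `x` be a Jordan element (`ad(x)^3 = 0`) of a Lie algebra `L` over a field of
characteristic `≠ 2, 3`, and equip `L` with the product `a • b := [[a,x],b]`.
Then `ker_L(x) = {a | [x,[x,a]] = 0}` is a two-sided ideal of this nonassociative algebra:
for `a ∈ ker_L(x)` and arbitrary `b ∈ L`, both `a • b` and `b • a` lie in `ker_L(x)`. -/
theorem stmt13 {F L : Type*} [Field F] [LieRing L] [LieAlgebra F L]
    (h2 : (2 : F) ≠ 0) (h3 : (3 : F) ≠ 0)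
    (x : L) (hx : (LieAlgebra.ad F L x) ^ 3 = 0)
    (a : L) (ha : ⁅x, ⁅x, a⁆⁆ = 0) (b : L) :
    ⁅x, ⁅x, ⁅⁅a, x⁆, b⁆⁆⁆ = 0 ∧ ⁅x, ⁅x, ⁅⁅b, x⁆, a⁆⁆⁆ = 0 :=
  stmt13_general h3 x hx a ha b
end

section
/- Let L be a Lie algebra over a field F generated by a set X such that for every x ∈ X, ad(x)^d = 0 for some fixed d with d ≤ char F or char F = 0, and exp(ξ·ad(x)) is a well-defined automorphism of L for every ξ ∈ F. If F has more than d elements and V is a subspace of L invariant under all automorphisms of L, then V is an ideal of L. -/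
/-!
For `x ∈ X` and `v ∈ V`, the map `ξ ↦ exp(ξ ad x) v` is a polynomial of degree `< d` in `ξ`
with coefficients `(ad x)^i v / i!`, and it takes values in `V`. Evaluating it at `d` distinct
scalars and inverting the Vandermonde matrix puts every coefficient, in particular `⁅x, v⁆`,
into `V`. Hence `X` lies in the normalizer `{a | ⁅a, V⁆ ⊆ V}` of `V`, a Lie subalgebra, which
is therefore all of `L`.
-/

/-- The truncated exponential `exp(ξ · ad x) = ∑_{i<d} (ξ^i / i!) (ad x)^i`. -/
noncomputable def expAd {F L : Type*} [Field F] [LieRing L] [LieAlgebra F L]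
    (d : ℕ) (ξ : F) (x : L) : Module.End F L :=
  ∑ i ∈ Finset.range d, (ξ ^ i * ((Nat.factorial i : F)⁻¹)) • (LieAlgebra.ad F L x) ^ i

open LieAlgebra

namespace Submodule

variable {K M : Type*} [Field K] [AddCommGroup M] [Module K M]

theorem mem_of_forall_sum_pow_smul_mem (V : Submodule K M) {n : ℕ} {f : Fin n → K}
    (hf : Function.Injective f) {c : Fin n → M} (h : ∀ j, ∑ i : Fin n, f j ^ (i : ℕ) • c i ∈ V)
    (i : Fin n) : c i ∈ V := by
  rw [← Subspace.forall_mem_dualAnnihilator_apply_eq_zero_iff]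
  intro φ hφ
  have hφc : (fun i => φ (c i)) = 0 :=
    Matrix.eq_zero_of_forall_index_sum_pow_mul_eq_zero hf fun j => by
      simpa only [map_sum, map_smul, smul_eq_mul] using (mem_dualAnnihilator φ).1 hφ _ (h j)
  exact congrFun hφc i

variable {R L : Type*} [CommRing R] [LieRing L] [LieAlgebra R L]

def lieNormalizer (V : Submodule R L) : LieSubalgebra R L where
  carrier := {a | ∀ v ∈ V, ⁅a, v⁆ ∈ V}
  add_mem' ha hb v hv := by
    rw [add_lie]
    exact V.add_mem (ha v hv) (hb v hv)
  zero_mem' v _ := by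
    rw [zero_lie]
    exact V.zero_mem
  smul_mem' t _ ha v hv := by
    rw [smul_lie]
    exact V.smul_mem t (ha v hv)
  lie_mem' ha hb v hv := by
    rw [lie_lie]
    exact V.sub_mem (ha _ (hb v hv)) (hb _ (ha v hv))

theorem mem_lieNormalizer {V : Submodule R L} {a : L} :
    a ∈ V.lieNormalizer ↔ ∀ v ∈ V, ⁅a, v⁆ ∈ V :=
  Iff.rfl

end Submodule

section ExpAd

variable {F L : Type*} [Field F] [LieRing L] [LieAlgebra F L]

theorem expAd_apply (d : ℕ) (ξ : F) (x v : L) :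
    expAd d ξ x v =
      ∑ i : Fin d, ξ ^ (i : ℕ) • ((Nat.factorial i : F)⁻¹ • (ad F L x ^ (i : ℕ)) v) := by
  rw [expAd, LinearMap.sum_apply, ← Fin.sum_univ_eq_sum_range]
  simp only [LinearMap.smul_apply, mul_smul]

theorem lie_mem_of_forall_expAd_apply_mem {d : ℕ} {x v : L} (V : Submodule F L)
    (hd : ad F L x ^ d = 0) (hF : ∃ f : Fin d → F, Function.Injective f)
    (h : ∀ ξ : F, expAd d ξ x v ∈ V) : ⁅x, v⁆ ∈ V := by
  rcases Nat.lt_or_ge 1 d with hd1 | hd1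
  · obtain ⟨f, hf⟩ := hF
    have hcoeff := V.mem_of_forall_sum_pow_smul_mem hf
      (fun j => (expAd_apply d (f j) x v).symm ▸ h (f j)) ⟨1, hd1⟩
    simpa using hcoeff
  · have had : ad F L x = 0 := pow_one (ad F L x) ▸ pow_eq_zero_of_le hd1 hd
    rw [← ad_apply (R := F), had, LinearMap.zero_apply]
    exact V.zero_mem

end ExpAd

theorem stmt15_general {F L : Type*} [Field F] [LieRing L] [LieAlgebra F L]
    (X : Set L) (hgen : LieSubalgebra.lieSpan F L X = ⊤)
    (d : ℕ)
    (hd : ∀ x ∈ X, (LieAlgebra.ad F L x) ^ d = 0)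
    (hexp : ∀ x ∈ X, ∀ ξ : F,
      Function.Bijective (expAd d ξ x) ∧
      ∀ a b : L, expAd d ξ x ⁅a, b⁆ = ⁅expAd d ξ x a, expAd d ξ x b⁆)
    (hcard : ∃ f : Fin (d + 1) → F, Function.Injective f)
    (V : Submodule F L)
    (hV : ∀ e : L ≃ₗ⁅F⁆ L, ∀ v ∈ V, e v ∈ V) :
    ∀ a : L, ∀ v ∈ V, ⁅a, v⁆ ∈ V := by
  obtain ⟨f, hf⟩ := hcard
  have hX : X ⊆ V.lieNormalizer := by
    intro x hx v hv
    refine lie_mem_of_forall_expAd_apply_mem V (hd x hx)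
      ⟨f ∘ Fin.castSucc, hf.comp (Fin.castSucc_injective _)⟩ fun ξ => ?_
    obtain ⟨hbij, hlie⟩ := hexp x hx ξ
    exact hV (.ofBijective { expAd d ξ x with map_lie' := hlie _ _ } hbij) v hv
  have hspan : ⊤ ≤ V.lieNormalizer := hgen ▸ LieSubalgebra.lieSpan_le.2 hX
  exact fun a => Submodule.mem_lieNormalizer.1 (hspan (LieSubalgebra.mem_top a))

/-- Let `L` be a Lie algebra over a field `F` generated by a set `X` such that
`ad(x)^d = 0` for every `x ∈ X`, where `d ≤ char F` or `char F = 0` (so the factorials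
`i!`, `i < d`, are invertible in `F`) and each truncated exponential
`exp(ξ · ad x)` is a well-defined automorphism of `L`.  If `F` has more than `d` elements
and `V` is a subspace of `L` invariant under all (Lie algebra) automorphisms of `L`,
then `V` is an ideal of `L`. -/
theorem stmt15 {F L : Type*} [Field F] [LieRing L] [LieAlgebra F L]
    (X : Set L) (hgen : LieSubalgebra.lieSpan F L X = ⊤)
    (d : ℕ)
    (hchar : ringChar F = 0 ∨ d ≤ ringChar F)
    (hfac : ∀ i : ℕ, i < d → (Nat.factorial i : F) ≠ 0)
    (hd : ∀ x ∈ X, (LieAlgebra.ad F L x) ^ d = 0)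
    (hexp : ∀ x ∈ X, ∀ ξ : F,
      Function.Bijective (expAd d ξ x) ∧
      ∀ a b : L, expAd d ξ x ⁅a, b⁆ = ⁅expAd d ξ x a, expAd d ξ x b⁆)
    (hcard : ∃ f : Fin (d + 1) → F, Function.Injective f)
    (V : Submodule F L)
    (hV : ∀ e : L ≃ₗ⁅F⁆ L, ∀ v ∈ V, e v ∈ V) :
    ∀ a : L, ∀ v ∈ V, ⁅a, v⁆ ∈ V :=
  stmt15_general X hgen d hd hexp hcard V hV
end

section
/- With R_i = M_{p^i}(F) ⊕ M_{p^i}(F), involution (A,B)* = (Bᵀ,Aᵀ), and the embedding φ_i of signature (k+1,k) as above (p = 2k+1), for every (M, −Mᵀ) in the skew part K(R_i,*), writing φ_i(M,−Mᵀ) = (M₁, −M₁ᵀ), one has Tr(M₁) = Tr(M). In particular, if Tr(M) ≠ 0 then the image of (M,−Mᵀ) in any R_j, j ≥ i, is never a sum of commutators of skew elements. -/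
/-!
The embedding `φ` puts `k + 1` copies of `M` and `k` copies of `-Mᵀ` on the diagonal, so the
trace of the first component is multiplied by `(k + 1) - k = 1`, and the image is again of the
form `(M₁, -M₁ᵀ)`. Iterating, every image of `(M, -Mᵀ)` has first component of trace `Tr M`,
whereas the trace of the first component vanishes on every commutator, hence on their span.
-/

open Matrix

/-- `Mₚᵢ(F)`, the full matrix algebra of size `pⁱ` with `p = 2k+1`. -/
abbrev MatP (F : Type*) (k i : ℕ) : Type _ :=
  Matrix (Fin ((2 * k + 1) ^ i)) (Fin ((2 * k + 1) ^ i)) F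

/-- `Rᵢ = M_{pⁱ}(F) ⊕ M_{pⁱ}(F)`. -/
abbrev Rlev (F : Type*) (k i : ℕ) : Type _ := MatP F k i × MatP F k i

/-- Reindexing equivalence `Fin pⁱ × Fin p ≃ Fin pⁱ⁺¹`. -/
def finPowEquiv (k i : ℕ) :
    Fin ((2 * k + 1) ^ i) × Fin (2 * k + 1) ≃ Fin ((2 * k + 1) ^ (i + 1)) :=
  finProdFinEquiv.trans (finCongr (pow_succ (2 * k + 1) i).symm)

/-- `diag(M,…,M,N,…,N)` with `k+1` copies of `M` and `k` copies of `N`, viewed as a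
matrix of size `pⁱ⁺¹`. -/
def stepMat {F : Type*} [Zero F] {k i : ℕ} (M N : MatP F k i) : MatP F k (i + 1) :=
  Matrix.reindex (finPowEquiv k i) (finPowEquiv k i)
    (Matrix.blockDiagonal fun j : Fin (2 * k + 1) => if (j : ℕ) < k + 1 then M else N)

/-- The embedding `φᵢ : Rᵢ → Rᵢ₊₁` of signature `(k+1, k, 0)`. -/
def step {F : Type*} [Zero F] {k i : ℕ} (x : Rlev F k i) : Rlev F k (i + 1) :=
  (stepMat x.1 x.2, stepMat x.2 x.1)

/-- The composite embedding `Rᵢ → R_{i+j}`. -/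
def embed {F : Type*} [Zero F] {k i : ℕ} : ∀ j, Rlev F k i → Rlev F k (i + j)
  | 0 => id
  | j + 1 => fun x => step (embed j x)

/-- The skew part `K(Rₘ, *) = {r : r* = -r}` for the involution `(A,B)* = (Bᵀ,Aᵀ)`. -/
def skewSet (F : Type*) [Neg F] (k m : ℕ) : Set (Rlev F k m) :=
  {r | ((r.2)ᵀ, (r.1)ᵀ) = -r}

theorem Matrix.trace_reindex {R m n : Type*} [AddCommMonoid R] [Fintype m] [Fintype n]
    (e : m ≃ n) (A : Matrix m m R) : trace (reindex e e A) = trace A :=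
  Fintype.sum_equiv e.symm _ _ fun _ => rfl

theorem Fin.sum_ite_val_lt {M : Type*} [AddCommMonoid M] {n m : ℕ} (hmn : m ≤ n) (a b : M) :
    ∑ j : Fin n, (if (j : ℕ) < m then a else b) = m • a + (n - m) • b := by
  have hcard :=
    Finset.card_filter_add_card_filter_not (s := Finset.univ) fun j : Fin n => (j : ℕ) < m
  rw [Fin.card_filter_val_lt, Finset.card_univ, Fintype.card_fin, min_eq_right hmn] at hcard
  rw [Finset.sum_ite, Finset.sum_const, Finset.sum_const, Fin.card_filter_val_lt,
    min_eq_right hmn,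
    show (Finset.univ.filter fun j : Fin n => ¬(j : ℕ) < m).card = n - m by omega]

theorem Matrix.trace_fst_eq_zero_of_mem_span_commutators {R n : Type*} [CommRing R] [Fintype n]
    {s t : Set (Matrix n n R × Matrix n n R)} {x : Matrix n n R × Matrix n n R}
    (hx : x ∈ Submodule.span R {x | ∃ a ∈ s, ∃ b ∈ t, x = a * b - b * a}) :
    trace x.1 = 0 := by
  induction hx using Submodule.span_induction with
  | mem x hx =>
    obtain ⟨a, -, b, -, rfl⟩ := hx
    simp only [Prod.fst_sub, Prod.fst_mul, trace_sub, trace_mul_comm a.1, sub_self]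
  | zero => exact trace_zero _ _
  | add x y _ _ hx hy => rw [Prod.fst_add, trace_add, hx, hy, add_zero]
  | smul r x _ hx => rw [Prod.smul_fst, trace_smul, hx, smul_zero]

section stepMat

variable {F : Type*} {k i : ℕ}

theorem stepMat_transpose [Zero F] (M N : MatP F k i) : (stepMat M N)ᵀ = stepMat Mᵀ Nᵀ := by
  rw [stepMat, stepMat, transpose_reindex, blockDiagonal_transpose]
  simp only [apply_ite transpose]

theorem stepMat_neg [AddGroup F] (M N : MatP F k i) : stepMat (-M) (-N) = -stepMat M N := by
  have hblocks : (fun j : Fin (2 * k + 1) => if (j : ℕ) < k + 1 then -M else -N) =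
      -fun j : Fin (2 * k + 1) => if (j : ℕ) < k + 1 then M else N :=
    funext fun _ => (apply_ite Neg.neg _ M N).symm
  rw [stepMat, stepMat, hblocks, blockDiagonal_neg]
  rfl

theorem trace_stepMat [AddCommMonoid F] (M N : MatP F k i) :
    trace (stepMat M N) = (k + 1) • trace M + k • trace N := by
  rw [stepMat, trace_reindex, trace_blockDiagonal]
  simp only [apply_ite trace]
  rw [Fin.sum_ite_val_lt (by omega), show 2 * k + 1 - (k + 1) = k by omega]

theorem trace_stepMat_neg_transpose [AddCommGroup F] (M : MatP F k i) :
    trace (stepMat M (-Mᵀ)) = trace M := by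
  rw [trace_stepMat, trace_neg, trace_transpose, smul_neg, succ_nsmul]
  abel

theorem step_neg_transpose [AddGroup F] (M : MatP F k i) :
    step (M, -Mᵀ) = (stepMat M (-Mᵀ), -(stepMat M (-Mᵀ))ᵀ) := by
  rw [step, stepMat_transpose, ← stepMat_neg, transpose_neg, transpose_transpose, neg_neg]

theorem embed_neg_transpose [AddCommGroup F] (M : MatP F k i) (j : ℕ) :
    ∃ M' : MatP F k (i + j), embed j (M, -Mᵀ) = (M', -M'ᵀ) ∧ trace M' = trace M := by
  induction j with
  | zero => exact ⟨M, rfl, rfl⟩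
  | succ j ih =>
    obtain ⟨M', hembed, htrace⟩ := ih
    refine ⟨stepMat M' (-M'ᵀ), ?_, by rw [trace_stepMat_neg_transpose, htrace]⟩
    show step (embed j _) = _
    rw [hembed, step_neg_transpose]

end stepMat

theorem stmt17_general {F : Type*} [Field F] (k i : ℕ)
    (M : MatP F k i) :
    (step (M, -(Mᵀ))).2 = -((step (M, -(Mᵀ))).1)ᵀ ∧
    Matrix.trace (step (M, -(Mᵀ))).1 = Matrix.trace M ∧
    (Matrix.trace M ≠ 0 → ∀ j : ℕ,
      embed j (M, -(Mᵀ)) ∉ Submodule.span F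
        {x : Rlev F k (i + j) | ∃ a ∈ skewSet F k (i + j), ∃ b ∈ skewSet F k (i + j),
          x = a * b - b * a}) := by
  refine ⟨by rw [step_neg_transpose], by rw [step_neg_transpose, trace_stepMat_neg_transpose],
    fun hM j hspan => hM ?_⟩
  obtain ⟨M', hembed, htrace⟩ := embed_neg_transpose M j
  rw [hembed] at hspan
  exact htrace ▸ trace_fst_eq_zero_of_mem_span_commutators hspan

/-- For `p = 2k+1` an odd prime and the signature `(k+1,k)` embedding `φᵢ`, every skew
element `(M, -(Mᵀ))` of `Rᵢ` is sent to a skew element `(M₁, -M₁ᵀ)` with `Tr M₁ = Tr M`;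
in particular, if `Tr M ≠ 0` then the image of `(M, -(Mᵀ))` in any `R_{i+j}` is never a sum
of commutators of skew elements. -/
theorem stmt17 {F : Type*} [Field F] (k i : ℕ) (hp : Nat.Prime (2 * k + 1))
    (M : MatP F k i) :
    (step (M, -(Mᵀ))).2 = -((step (M, -(Mᵀ))).1)ᵀ ∧
    Matrix.trace (step (M, -(Mᵀ))).1 = Matrix.trace M ∧
    (Matrix.trace M ≠ 0 → ∀ j : ℕ,
      embed j (M, -(Mᵀ)) ∉ Submodule.span F
        {x : Rlev F k (i + j) | ∃ a ∈ skewSet F k (i + j), ∃ b ∈ skewSet F k (i + j),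
          x = a * b - b * a}) :=
  stmt17_general k i M
end

section
/- The direct limit R = lim→ R_i of the algebras R_i = M_{p^i}(F) ⊕ M_{p^i}(F) under the embeddings φ_i of signature (k+1, k) (p = 2k+1 an odd prime, F a field) is a simple associative algebra. -/
namespace TwoSidedIdeal

variable {A B : Type*} [Ring A] [Ring B] [IsSimpleRing A] [IsSimpleRing B]

theorem eq_top_of_prod_mem (I : TwoSidedIdeal (A × B)) {a : A} {b : B} (ha : a ≠ 0) (hb : b ≠ 0)
    (hab : (a, b) ∈ I) : I = ⊤ := by
  have hA : ((1 : A), (0 : B)) ∈ I := by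
    refine mem_comap ((NonUnitalRingHom.id A).prod (0 : A →ₙ+* B)) |>.1 <|
      IsSimpleRing.one_mem_of_ne_zero_mem _ ha (mem_comap _ |>.2 ?_)
    simpa using I.mul_mem_right _ (1, 0) hab
  have hB : ((0 : A), (1 : B)) ∈ I := by
    refine mem_comap ((0 : B →ₙ+* A).prod (NonUnitalRingHom.id B)) |>.1 <|
      IsSimpleRing.one_mem_of_ne_zero_mem _ hb (mem_comap _ |>.2 ?_)
    simpa using I.mul_mem_right _ (0, 1) hab
  have h11 : ((1 : A), (1 : B)) ∈ I := by simpa using I.add_mem hA hB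
  exact I.one_mem_iff.1 h11

end TwoSidedIdeal

section Step

variable {F : Type*} [Zero F] {k i : ℕ}

theorem stepMat_apply_finPowEquiv (M N : MatP F k i) (a b : Fin ((2 * k + 1) ^ i))
    (j : Fin (2 * k + 1)) :
    stepMat M N (finPowEquiv k i (a, j)) (finPowEquiv k i (b, j)) =
      if (j : ℕ) < k + 1 then M a b else N a b := by
  simp [stepMat, Matrix.blockDiagonal_apply, apply_ite (fun P : MatP F k i => P a b)]

theorem stepMat_ne_zero (hk : k ≠ 0) {M N : MatP F k i} (h : M ≠ 0 ∨ N ≠ 0) :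
    stepMat M N ≠ 0 := by
  intro h0
  have block (j : Fin (2 * k + 1)) (a b) :
      (if (j : ℕ) < k + 1 then M a b else N a b) = 0 := by
    rw [← stepMat_apply_finPowEquiv, h0, Matrix.zero_apply]
  rcases h with hM | hN
  · exact hM (Matrix.ext fun a b => by simpa using block ⟨0, by omega⟩ a b)
  · exact hN (Matrix.ext fun a b => by simpa using block ⟨k + 1, by omega⟩ a b)

theorem step_ne_zero (hk : k ≠ 0) {x : Rlev F k i} (hx : x ≠ 0) :
    (step x).1 ≠ 0 ∧ (step x).2 ≠ 0 := by
  have hx' : x.1 ≠ 0 ∨ x.2 ≠ 0 := by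
    by_contra! h
    exact hx (Prod.ext h.1 h.2)
  exact ⟨stepMat_ne_zero hk hx', stepMat_ne_zero hk hx'.symm⟩

end Step

/-- The direct limit `R = lim→ Rᵢ` of the algebras `Rᵢ = M_{pⁱ}(F) ⊕ M_{pⁱ}(F)` along the
signature `(k+1,k)` embeddings `φᵢ` (for `p = 2k+1` an odd prime) is a simple associative
algebra: any ring `R` realizing this direct limit (i.e. equipped with compatible ring
homomorphisms `gᵢ : Rᵢ → R` whose ranges cover `R`) has exactly two two-sided ideals. -/
theorem stmt18 {F : Type*} [Field F] (k : ℕ) (hp : Nat.Prime (2 * k + 1))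
    (R : Type*) [Ring R] [Nontrivial R]
    (g : ∀ i : ℕ, Rlev F k i →+* R)
    (hcomp : ∀ (i : ℕ) (x : Rlev F k i), g (i + 1) (step x) = g i x)
    (hcover : ∀ r : R, ∃ (i : ℕ) (x : Rlev F k i), g i x = r) :
    IsSimpleOrder (TwoSidedIdeal R) := by
  have hk : k ≠ 0 := by
    rintro rfl
    exact Nat.not_prime_one hp
  refine (IsSimpleRing.of_eq_bot_or_eq_top fun I => or_iff_not_imp_left.2 fun hI => ?_).simple
  obtain ⟨r, hrI, hr0 : r ≠ 0⟩ := SetLike.exists_of_lt (bot_lt_iff_ne_bot.2 hI)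
  obtain ⟨i, x, rfl⟩ := hcover r
  have hx : x ≠ 0 := by
    rintro rfl
    exact hr0 (map_zero _)
  have hstep : step x ∈ I.comap (g (i + 1)) := by
    rwa [TwoSidedIdeal.mem_comap, hcomp]
  have htop : I.comap (g (i + 1)) = ⊤ :=
    TwoSidedIdeal.eq_top_of_prod_mem _ (step_ne_zero hk hx).1 (step_ne_zero hk hx).2 hstep
  rw [← I.one_mem_iff, ← map_one (g (i + 1)), ← TwoSidedIdeal.mem_comap, htop]
  trivial
end
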